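/- arXiv:1506.03364 — 4 statements merged into one kernel-verified Lean document; each statement's English description precedes it below -/
import Mathlib

section
/- Let κ be a weakly compact cardinal and T ⊆ κ^{<κ} a pruned subtree. If [T] contains a closed-in-κ^κ subset homeomorphic to κ^κ, then T contains a κ-Miller subtree. -/
open Cardinal Set Topology

universe u

/-- The bounded topology on `K → Y`: basic open sets are determined by an
initial segment of values. -/
def bTop (K : Type u) [LinearOrder K] (Y : Type u) : TopologicalSpace (K → Y) :=
  TopologicalSpace.generateFrom
    {U | ∃ (b : K) (s : K → Y), U = {x | ∀ i, i < b → x i = s i}}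

/-- `A` is κ-compact: every open cover (for the bounded topology) has a
subcover of size `< #K`. -/
def KCompact (K : Type u) [LinearOrder K] {Y : Type u} (A : Set (K → Y)) : Prop :=
  ∀ 𝒰 : Set (Set (K → Y)), (∀ U ∈ 𝒰, IsOpen[bTop K Y] U) → A ⊆ ⋃₀ 𝒰 →
    ∃ 𝒱 ⊆ 𝒰, #𝒱 < #K ∧ A ⊆ ⋃₀ 𝒱

/-- `B` is a `K_κ` subset: a union of κ-many κ-compact sets. -/
def IsKK (K : Type u) [LinearOrder K] (B : Set (K → K)) : Prop :=
  ∃ C : K → Set (K → K), (∀ b, KCompact K (C b)) ∧ B = ⋃ b, C b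

/-- Nodes of the tree `Y^{<K}`: sequences of length `b`, for `b : K`. -/
abbrev Nd (K : Type u) [LinearOrder K] (Y : Type u) := Σ b : K, (Set.Iio b → Y)

/-- Restriction of a node to a smaller length. -/
def ndRes (K : Type u) [LinearOrder K] {Y : Type u} (p : Nd K Y) (c : K) (h : c ≤ p.1) :
    Nd K Y :=
  ⟨c, fun i => p.2 ⟨i.1, lt_of_lt_of_le i.2 h⟩⟩

/-- Restriction of a branch `x : K → Y` to length `b`. -/
def xRes (K : Type u) [LinearOrder K] {Y : Type u} (x : K → Y) (b : K) : Nd K Y :=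
  ⟨b, fun i => x i.1⟩

/-- `q` extends `p` as a sequence. -/
def NdExt (K : Type u) [LinearOrder K] {Y : Type u} (q p : Nd K Y) : Prop :=
  ∃ h : p.1 ≤ q.1, ∀ i : Set.Iio p.1, q.2 ⟨i.1, lt_of_lt_of_le i.2 h⟩ = p.2 i

/-- A subtree of `Y^{<K}`: a set of nodes closed under restriction. -/
def IsSubtree (K : Type u) [LinearOrder K] {Y : Type u} (T : Set (Nd K Y)) : Prop :=
  ∀ p ∈ T, ∀ c, ∀ h : c ≤ p.1, ndRes K p c h ∈ T

/-- The body `[T]`: the set of `K`-branches through `T`. -/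
def body (K : Type u) [LinearOrder K] {Y : Type u} (T : Set (Nd K Y)) : Set (K → Y) :=
  {x | ∀ b : K, xRes K x b ∈ T}

/-- `T` is pruned: every node is extended by a branch. -/
def Pruned (K : Type u) [LinearOrder K] {Y : Type u} (T : Set (Nd K Y)) : Prop :=
  ∀ p ∈ T, ∃ x ∈ body K T, NdExt K (xRes K x p.1) p

/-- `b` is a limit element: not least, and with no immediate predecessor. -/
def IsLimElt (K : Type u) [LinearOrder K] (b : K) : Prop :=
  (∃ c, c < b) ∧ ∀ c, c < b → ∃ d, c < d ∧ d < b

/-- Superclosed: closed under unions of increasing sequences of length `< K`. -/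
def Superclosed (K : Type u) [LinearOrder K] {Y : Type u} (T : Set (Nd K Y)) : Prop :=
  ∀ p : Nd K Y, IsLimElt K p.1 → (∀ c, ∀ h : c < p.1, ndRes K p c h.le ∈ T) → p ∈ T

/-- The values at position `p.1` realized by extensions of `p` in `T`, i.e. the
immediate successors of `p` in `T`. -/
def splitVals (K : Type u) [LinearOrder K] {Y : Type u} (T : Set (Nd K Y)) (p : Nd K Y) :
    Set Y :=
  {a | ∃ q ∈ T, ∃ h : p.1 < q.1,
    (∀ i : Set.Iio p.1, q.2 ⟨i.1, i.2.trans h⟩ = p.2 i) ∧ q.2 ⟨p.1, h⟩ = a}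

/-- A perfect tree: a nonempty superclosed subtree in which every node is
extended by a 2-splitting node. -/
def PerfectTree (K : Type u) [LinearOrder K] (T : Set (Nd K K)) : Prop :=
  T.Nonempty ∧ IsSubtree K T ∧ Superclosed K T ∧
    ∀ p ∈ T, ∃ q ∈ T, NdExt K q p ∧
      ∃ a ∈ splitVals K T q, ∃ a' ∈ splitVals K T q, a ≠ a'

/-- A κ-Miller tree: a nonempty superclosed subtree in which every node is
extended by a κ-splitting node. -/
def MillerTree (K : Type u) [LinearOrder K] (T : Set (Nd K K)) : Prop :=
  T.Nonempty ∧ IsSubtree K T ∧ Superclosed K T ∧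
    ∀ p ∈ T, ∃ q ∈ T, NdExt K q p ∧ #K ≤ #(splitVals K T q)

/-- A κ-tree: a subtree of height `K` all of whose levels have size `< #K`. -/
def KTree (K : Type u) [LinearOrder K] {Y : Type u} (T : Set (Nd K Y)) : Prop :=
  (∀ b : K, ∃ t : Set.Iio b → Y, (⟨b, t⟩ : Nd K Y) ∈ T) ∧
    ∀ b : K, #{t : Set.Iio b → Y | (⟨b, t⟩ : Nd K Y) ∈ T} < #K

/-- A κ-Aronszajn tree: a κ-tree with no branch. -/
def Aronszajn (K : Type u) [LinearOrder K] (S : Set (Nd K K)) : Prop :=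
  IsSubtree K S ∧ KTree K S ∧ body K S = ∅

/-- The tree property for `K`: every κ-tree has a branch. -/
def TreeProp (K : Type u) [LinearOrder K] : Prop :=
  ∀ T : Set (Nd K K), IsSubtree K T → KTree K T → (body K T).Nonempty

/-- weak compactness: inaccessibility together with the tree property. -/
def WComp (K : Type u) [LinearOrder K] : Prop :=
  (#K).IsInaccessible ∧ TreeProp K

/-- `C` is homeomorphic to the generalized Baire space `K → K`. -/
def HomeoToBaire (K : Type u) [LinearOrder K] (C : Set (K → K)) : Prop :=
  letI := bTop K K
  Nonempty (↥C ≃ₜ (K → K))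

/-- `C` is homeomorphic to the generalized Cantor space `K → ULift.{u} Bool`. -/
def HomeoToCantor (K : Type u) [LinearOrder K] (C : Set (K → K)) : Prop :=
  letI := bTop K K
  letI : TopologicalSpace (K → ULift.{u} Bool) := bTop K (ULift.{u} Bool)
  Nonempty (↥C ≃ₜ (K → ULift.{u} Bool))

/-- The Hurewicz dichotomy for `A`. -/
def HD (K : Type u) [LinearOrder K] (A : Set (K → K)) : Prop :=
  (∃ B, IsKK K B ∧ A ⊆ B) ∨
    ∃ C ⊆ A, IsClosed[bTop K K] C ∧ HomeoToBaire K C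

/-- The Miller-tree Hurewicz dichotomy for `A`. -/
def MillerHD (K : Type u) [LinearOrder K] (A : Set (K → K)) : Prop :=
  (∃ B, IsKK K B ∧ A ⊆ B) ∨ ∃ T, MillerTree K T ∧ body K T ⊆ A

/-- Σ¹₁ subsets of `K → K`: projections of closed subsets of the product. -/
def Sigma11 (K : Type u) [LinearOrder K] (A : Set (K → K)) : Prop :=
  letI := bTop K K
  ∃ C : Set ((K → K) × (K → K)), IsClosed C ∧ A = Prod.fst '' C

/-- The κ-perfect set property. -/
def PSP (K : Type u) [LinearOrder K] (A : Set (K → K)) : Prop :=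
  #A ≤ #K ∨ ∃ C ⊆ A, IsClosed[bTop K K] C ∧ HomeoToCantor K C

/-- `A ⊆ K → K` is bounded. -/
def BddSet (K : Type u) [LinearOrder K] (A : Set (K → K)) : Prop :=
  ∃ x : K → K, ∀ y ∈ A, ∀ i, y i ≤ x i

/-- `A ⊆ K → K` is eventually bounded. -/
def EvBddSet (K : Type u) [LinearOrder K] (A : Set (K → K)) : Prop :=
  ∃ x : K → K, ∀ y ∈ A, ∃ b : K, ∀ i, b ≤ i → y i ≤ x i

/-- Nodes of the product tree `K^{<K} × K^{<K}` (pairs of equal length). -/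
abbrev PNd (K : Type u) [LinearOrder K] := Σ b : K, (Set.Iio b → K) × (Set.Iio b → K)

/-- Subtree of the product tree: closed under simultaneous restriction. -/
def IsPSubtree (K : Type u) [LinearOrder K] (T : Set (PNd K)) : Prop :=
  ∀ p ∈ T, ∀ c, ∀ h : c ≤ p.1,
    (⟨c, fun i => p.2.1 ⟨i.1, lt_of_lt_of_le i.2 h⟩,
        fun i => p.2.2 ⟨i.1, lt_of_lt_of_le i.2 h⟩⟩ : PNd K) ∈ T

/-- The projection `p[T]` of the set of branches of a product tree to the first
coordinate. -/
def pProj (K : Type u) [LinearOrder K] (T : Set (PNd K)) : Set (K → K) :=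
  {x | ∃ y : K → K, ∀ b : K,
    (⟨b, fun i => x i.1, fun i => y i.1⟩ : PNd K) ∈ T}

/-- An `∃^x`-perfect embedding into a product tree `T`. -/
def PerfEmb (K : Type u) [LinearOrder K] (T : Set (PNd K)) (e : Nd K (ULift.{u} Bool) → PNd K) : Prop :=
  (∀ u, e u ∈ T) ∧
  (∀ u u' : Nd K (ULift.{u} Bool), ∀ h : u.1 < u'.1,
     (∀ i : Set.Iio u.1, u'.2 ⟨i.1, i.2.trans h⟩ = u.2 i) →
     ∃ h' : (e u).1 < (e u').1,
       (∀ i : Set.Iio (e u).1, (e u').2.1 ⟨i.1, i.2.trans h'⟩ = (e u).2.1 i) ∧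
       (∀ i : Set.Iio (e u).1, (e u').2.2 ⟨i.1, i.2.trans h'⟩ = (e u).2.2 i)) ∧
  (∀ u u' : Nd K (ULift.{u} Bool), ¬ NdExt K u u' → ¬ NdExt K u' u →
     ¬ NdExt K ⟨(e u).1, (e u).2.1⟩ ⟨(e u').1, (e u').2.1⟩ ∧
     ¬ NdExt K ⟨(e u').1, (e u').2.1⟩ ⟨(e u).1, (e u).2.1⟩) ∧
  (∀ u : Nd K (ULift.{u} Bool), IsLimElt K u.1 → ∀ d, d < (e u).1 →
     ∃ c, ∃ h : c < u.1, d < (e (ndRes K u c h.le)).1)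

/-- The immediate extension `u⌢⟨a⟩` of a node `u` by a value `a`. -/
def extNd (K : Type u) [LinearOrder K] [SuccOrder K] (u : Nd K K) (a : K) : Nd K K :=
  ⟨Order.succ u.1, fun i => if h : i.1 < u.1 then u.2 ⟨i.1, h⟩ else a⟩

/-- An `∃^x`-superperfect embedding into a product tree `T`. -/
def SuperPerfEmb (K : Type u) [LinearOrder K] [SuccOrder K] (T : Set (PNd K))
    (e : Nd K K → PNd K) : Prop :=
  (∀ u, e u ∈ T) ∧
  (∀ u u' : Nd K K, ∀ h : u.1 < u'.1,
     (∀ i : Set.Iio u.1, u'.2 ⟨i.1, i.2.trans h⟩ = u.2 i) →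
     ∃ h' : (e u).1 < (e u').1,
       (∀ i : Set.Iio (e u).1, (e u').2.1 ⟨i.1, i.2.trans h'⟩ = (e u).2.1 i) ∧
       (∀ i : Set.Iio (e u).1, (e u').2.2 ⟨i.1, i.2.trans h'⟩ = (e u).2.2 i)) ∧
  (∀ u : Nd K K, IsLimElt K u.1 → ∀ d, d < (e u).1 →
     ∃ c, ∃ h : c < u.1, d < (e (ndRes K u c h.le)).1) ∧
  (∀ u : Nd K K, ∃ γ : K, (e u).1 ≤ γ ∧
     ∃ hlen : ∀ a : K, γ < (e (extNd K u a)).1,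
       ∀ a b : K, a ≠ b →
         (∀ i : Set.Iio γ,
           (e (extNd K u a)).2.1 ⟨i.1, i.2.trans (hlen a)⟩ =
           (e (extNd K u b)).2.1 ⟨i.1, i.2.trans (hlen b)⟩) ∧
         (e (extNd K u a)).2.1 ⟨γ, hlen a⟩ ≠ (e (extNd K u b)).2.1 ⟨γ, hlen b⟩)

namespace MillerAux

set_option linter.unusedSectionVars false

open Classical

noncomputable section

variable {K : Type u} [LinearOrder K] [WellFoundedLT K]

/-! ### Basic node combinatorics -/

theorem ndExt_refl (p : Nd K K) : NdExt K p p :=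
  ⟨le_rfl, fun _ => rfl⟩

theorem ndExt_trans {p q r : Nd K K} (h1 : NdExt K q p) (h2 : NdExt K r q) :
    NdExt K r p := by
  obtain ⟨l1, e1⟩ := h1
  obtain ⟨l2, e2⟩ := h2
  refine ⟨l1.trans l2, fun i => ?_⟩
  have := e2 ⟨i.1, lt_of_lt_of_le i.2 l1⟩
  simpa [this] using e1 i

theorem ndExt_ndRes (p : Nd K K) (c : K) (h : c ≤ p.1) : NdExt K p (ndRes K p c h) :=
  ⟨h, fun _ => rfl⟩

theorem ndRes_ndRes (p : Nd K K) (c : K) (h : c ≤ p.1) (d : K) (h' : d ≤ c) :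
    ndRes K (ndRes K p c h) d h' = ndRes K p d (h'.trans h) := rfl

@[simp] theorem ndRes_fst (p : Nd K K) (c : K) (h : c ≤ p.1) : (ndRes K p c h).1 = c := rfl

theorem ndExt_ndRes_of_ndExt {q p : Nd K K} (h : NdExt K q p) (c : K) (hc : c ≤ p.1) :
    NdExt K q (ndRes K p c hc) :=
  ndExt_trans (ndExt_ndRes p c hc) h

variable [Nonempty K]

/-- value of a node at a position, with junk fallback. -/
def va (t : Nd K K) (i : K) : K :=
  if h : i < t.1 then t.2 ⟨i, h⟩ else Classical.arbitrary K

theorem va_eq (t : Nd K K) {i : K} (h : i < t.1) : va t i = t.2 ⟨i, h⟩ := dif_pos h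

theorem va_eq_of_ndExt {q p : Nd K K} (h : NdExt K q p) {i : K} (hi : i < p.1) :
    va q i = va p i := by
  obtain ⟨l, e⟩ := h
  rw [va_eq q (lt_of_lt_of_le hi l), va_eq p hi]
  exact e ⟨i, hi⟩

theorem ndExt_iff_va {q p : Nd K K} :
    NdExt K q p ↔ p.1 ≤ q.1 ∧ ∀ i, i < p.1 → va q i = va p i := by
  constructor
  · intro h
    exact ⟨h.1, fun i hi => va_eq_of_ndExt h hi⟩
  · rintro ⟨l, e⟩
    refine ⟨l, fun i => ?_⟩
    have := e i.1 i.2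
    rwa [va_eq q (lt_of_lt_of_le i.2 l), va_eq p i.2] at this

theorem nd_eq_iff {q p : Nd K K} (hl : q.1 = p.1) :
    q = p ↔ ∀ i, i < p.1 → va q i = va p i := by
  constructor
  · rintro rfl i hi; rfl
  · intro hv
    rcases q with ⟨b, f⟩
    rcases p with ⟨c, g⟩
    dsimp at hl
    subst hl
    simp only [Sigma.mk.inj_iff, heq_eq_eq, true_and]
    funext i
    have := hv i.1 i.2
    rwa [va_eq ⟨b, f⟩ i.2, va_eq ⟨b, g⟩ i.2] at this

theorem eq_of_ndExt_of_le {q p : Nd K K} (h : NdExt K q p) (hl : q.1 ≤ p.1) : q = p := by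
  have hl' : q.1 = p.1 := le_antisymm hl h.1
  exact (nd_eq_iff hl').2 fun i hi => va_eq_of_ndExt h hi

theorem ndExt_antisymm {q p : Nd K K} (h : NdExt K q p) (h' : NdExt K p q) : q = p :=
  eq_of_ndExt_of_le h h'.1

/-- comparable initial segments of a common extension agree -/
theorem ndExt_of_ndExt_of_ndExt_of_le {p q r : Nd K K} (hq : NdExt K r q) (hp : NdExt K r p)
    (hl : p.1 ≤ q.1) : NdExt K q p := by
  refine ndExt_iff_va.2 ⟨hl, fun i hi => ?_⟩
  rw [← va_eq_of_ndExt hq (lt_of_lt_of_le hi hl), ← va_eq_of_ndExt hp hi]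

/-! ### Cylinders -/

/-- The basic clopen set of branches through a node. -/
def cyl (t : Nd K K) : Set (K → K) := {x | ∀ i : Set.Iio t.1, x i.1 = t.2 i}

theorem mem_cyl {x : K → K} {t : Nd K K} : x ∈ cyl t ↔ ∀ i, i < t.1 → x i = va t i := by
  constructor
  · intro h i hi; rw [va_eq t hi]; exact h ⟨i, hi⟩
  · intro h i; have := h i.1 i.2; rwa [va_eq t i.2] at this

theorem cyl_mono {q p : Nd K K} (h : NdExt K q p) : cyl q ⊆ cyl p := by
  intro x hx
  refine mem_cyl.2 fun i hi => ?_
  rw [mem_cyl.1 hx i (lt_of_lt_of_le hi h.1), va_eq_of_ndExt h hi]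

theorem mem_cyl_xRes (x : K → K) (b : K) : x ∈ cyl (xRes K x b) := fun _ => rfl

theorem xRes_mem_cyl {x : K → K} {t : Nd K K} (hx : x ∈ cyl t) {b : K} (hb : t.1 ≤ b) :
    NdExt K (xRes K x b) t :=
  ⟨hb, fun i => hx i⟩

theorem ndRes_xRes (x : K → K) (b : K) (c : K) (h : c ≤ b) :
    ndRes K (xRes K x b) c h = xRes K x c := rfl

/-! ### Successor and least upper bounds -/

theorem wfK : WellFounded ((· < ·) : K → K → Prop) := IsWellFounded.wf

/-- the successor in `K` -/
def nxt [NoMaxOrder K] (b : K) : K := (wfK).min {c | b < c} (exists_gt b)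

theorem lt_nxt [NoMaxOrder K] (b : K) : b < nxt b := (wfK).min_mem {c | b < c} (exists_gt b)

theorem nxt_le_of_lt [NoMaxOrder K] {b c : K} (h : b < c) : nxt b ≤ c :=
  not_lt.1 ((wfK).not_lt_min {c | b < c} h)

theorem lt_nxt_iff [NoMaxOrder K] {b c : K} : c < nxt b ↔ c ≤ b := by
  constructor
  · intro h
    by_contra hc
    exact absurd (nxt_le_of_lt (not_le.1 hc)) (not_le.2 h)
  · intro h
    exact lt_of_le_of_lt h (lt_nxt b)

/-- least upper bound in `K`, with junk fallback -/
def lub (A : Set K) : K :=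
  if h : BddAbove A then (wfK).min (upperBounds A) h else Classical.arbitrary K

theorem le_lub {A : Set K} (h : BddAbove A) {a : K} (ha : a ∈ A) : a ≤ lub A := by
  rw [lub, dif_pos h]
  exact (wfK).min_mem (upperBounds A) h ha

theorem lub_le {A : Set K} (h : BddAbove A) {b : K} (hb : b ∈ upperBounds A) : lub A ≤ b := by
  rw [lub, dif_pos h]
  exact not_lt.1 ((wfK).not_lt_min (upperBounds A) hb)

theorem exists_lt_of_lt_lub {A : Set K} (h : BddAbove A) {i : K} (hi : i < lub A) :
    ∃ a ∈ A, i < a := by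
  by_contra hc
  push_neg at hc
  exact absurd (lub_le h fun a ha => hc a ha) (not_le.2 hi)

theorem bddAbove_of_small (hseg : ∀ b : K, #(Set.Iio b) < #K) (hreg : (#K).IsRegular)
    {A : Set K} (hA : #A < #K) : BddAbove A := by
  by_contra hb
  have hcov : (Set.univ : Set K) ⊆ ⋃ a : A, Set.Iio a.1 := by
    intro x _
    simp only [Set.mem_iUnion]
    rcases not_bddAbove_iff.1 hb x with ⟨a, ha, hxa⟩
    exact ⟨⟨a, ha⟩, hxa⟩
  have h1 : #K ≤ #(⋃ a : A, Set.Iio a.1) := by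
    calc #K = #(Set.univ : Set K) := by rw [Cardinal.mk_univ]
    _ ≤ _ := Cardinal.mk_le_mk_of_subset hcov
  have h2 : #(⋃ a : A, Set.Iio a.1) ≤ Cardinal.sum fun a : A => #(Set.Iio a.1) :=
    Cardinal.mk_iUnion_le_sum_mk
  have h3 : Cardinal.sum (fun a : A => #(Set.Iio a.1)) < #K :=
    Cardinal.sum_lt_of_isRegular hreg hA fun a => hseg a.1
  exact absurd (h1.trans h2) (not_le.2 h3)

/-- the one-point extension of a node -/
def chd [NoMaxOrder K] (w : Nd K K) (a : K) : Nd K K :=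
  ⟨nxt w.1, fun i => if h : i.1 < w.1 then w.2 ⟨i.1, h⟩ else a⟩

theorem chd_fst [NoMaxOrder K] (w : Nd K K) (a : K) : (chd w a).1 = nxt w.1 := rfl

theorem ndRes_chd [NoMaxOrder K] (w : Nd K K) (a : K) :
    ndRes K (chd w a) w.1 (lt_nxt w.1).le = w := by
  refine (nd_eq_iff (q := ndRes K (chd w a) w.1 (lt_nxt w.1).le) (p := w) rfl).2 fun i hi => ?_
  rw [va_eq (ndRes K (chd w a) w.1 (lt_nxt w.1).le) hi, va_eq w hi]
  dsimp only [chd, ndRes]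
  rw [dif_pos hi]

theorem va_chd_self [NoMaxOrder K] (w : Nd K K) (a : K) : va (chd w a) w.1 = a := by
  rw [va_eq _ (show w.1 < (chd w a).1 from lt_nxt w.1)]
  exact dif_neg (lt_irrefl w.1)

/-- restriction to a successor length is a one-point extension -/
theorem ndRes_nxt_eq_chd [NoMaxOrder K] (p : Nd K K) (d : K) (hd : d < p.1) :
    ndRes K p (nxt d) (nxt_le_of_lt hd) =
      chd (ndRes K p d hd.le) (p.2 ⟨d, hd⟩) := by
  refine (nd_eq_iff (q := ndRes K p (nxt d) (nxt_le_of_lt hd))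
    (p := chd (ndRes K p d hd.le) (p.2 ⟨d, hd⟩)) (by rw [chd_fst]; rfl)).2 fun i hi => ?_
  have hilt : i < nxt d := by rwa [chd_fst] at hi
  have hile : i ≤ d := lt_nxt_iff.1 hilt
  rw [va_eq (ndRes K p (nxt d) (nxt_le_of_lt hd)) hi, va_eq _ hi]
  dsimp only [chd, ndRes]
  rcases lt_or_eq_of_le hile with hlt | rfl
  · rw [dif_pos hlt]
  · rw [dif_neg (lt_irrefl i)]

/-! ### Topology -/

theorem va_xRes (x : K → K) {b i : K} (h : i < b) : va (xRes K x b) i = x i :=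
  va_eq _ (show i < (xRes K x b).1 from h)

theorem mem_cyl_xRes_iff {x y : K → K} {b : K} :
    y ∈ cyl (xRes K x b) ↔ ∀ i, i < b → y i = x i := by
  constructor
  · intro h i hi
    rw [mem_cyl.1 h i hi, va_xRes x (show i < b from hi)]
  · intro h
    refine mem_cyl.2 fun i hi => ?_
    rw [va_xRes x (show i < b from hi)]
    exact h i hi

theorem isOpen_cyl (t : Nd K K) : IsOpen[bTop K K] (cyl t) := by
  apply TopologicalSpace.isOpen_generateFrom_of_mem
  refine ⟨t.1, fun i => va t i, ?_⟩
  ext x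
  exact mem_cyl

theorem basic_nbhd {U : Set (K → K)} (hU : IsOpen[bTop K K] U) {x : K → K} (hx : x ∈ U) :
    ∃ b, cyl (xRes K x b) ⊆ U := by
  have hU' : TopologicalSpace.GenerateOpen
      {U | ∃ (b : K) (s : K → K), U = {x | ∀ i, i < b → x i = s i}} U := hU
  clear hU
  revert hx
  induction hU' with
  | basic V hV =>
    intro hx
    obtain ⟨b, s, rfl⟩ := hV
    refine ⟨b, fun y hy i hi => ?_⟩
    rw [mem_cyl_xRes_iff.1 hy i hi]
    exact hx i hi
  | univ => exact fun _ => ⟨Classical.arbitrary K, Set.subset_univ _⟩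
  | inter U V hUo hVo ihU ihV =>
    intro hx
    obtain ⟨b1, h1⟩ := ihU hx.1
    obtain ⟨b2, h2⟩ := ihV hx.2
    refine ⟨max b1 b2, fun y hy => ?_⟩
    have m1 : y ∈ cyl (xRes K x b1) :=
      cyl_mono (show NdExt K (xRes K x (max b1 b2)) (xRes K x b1) from
        ⟨le_max_left _ _, fun i => rfl⟩) hy
    have m2 : y ∈ cyl (xRes K x b2) :=
      cyl_mono (show NdExt K (xRes K x (max b1 b2)) (xRes K x b2) from
        ⟨le_max_right _ _, fun i => rfl⟩) hy
    exact ⟨h1 m1, h2 m2⟩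
  | sUnion S hS ih =>
    intro hx
    obtain ⟨V, hVS, hxV⟩ := hx
    obtain ⟨b, hb⟩ := ih V hVS hxV
    exact ⟨b, fun y hy => ⟨V, hVS, hb hy⟩⟩

theorem open_of_nbhd {O : Set (K → K)} (h : ∀ x ∈ O, ∃ t : Nd K K, x ∈ cyl t ∧ cyl t ⊆ O) :
    IsOpen[bTop K K] O := by
  have : O = ⋃₀ {V | ∃ t : Nd K K, V = cyl t ∧ V ⊆ O} := by
    apply Set.Subset.antisymm
    · intro x hx
      obtain ⟨t, hxt, hto⟩ := h x hx
      exact ⟨cyl t, ⟨t, rfl, hto⟩, hxt⟩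
    · rintro x ⟨V, ⟨t, rfl, hto⟩, hxV⟩
      exact hto hxV
  rw [this]
  exact TopologicalSpace.GenerateOpen.sUnion _ fun V hV => by
    obtain ⟨t, rfl, -⟩ := hV
    exact isOpen_cyl t

theorem isClosed_cyl [NoMaxOrder K] (t : Nd K K) : IsClosed[bTop K K] (cyl t) := by
  letI := bTop K K
  rw [← isOpen_compl_iff]
  apply open_of_nbhd
  intro x hx
  have : ¬ ∀ i, i < t.1 → x i = va t i := fun hc => hx (mem_cyl.2 hc)
  push_neg at this
  obtain ⟨i, hi, hne⟩ := this
  refine ⟨xRes K x (nxt i), mem_cyl_xRes x _, fun y hy hyc => ?_⟩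
  have hyi : y i = x i := mem_cyl_xRes_iff.1 hy i (lt_nxt i)
  exact hne (by rw [← hyi]; exact mem_cyl.1 hyc i hi)

/-- the coordinate-value set is open -/
theorem isOpen_coord [NoMaxOrder K] (b a : K) : IsOpen[bTop K K] {x : K → K | x b = a} := by
  apply open_of_nbhd
  intro x hx
  refine ⟨xRes K x (nxt b), mem_cyl_xRes x _, fun y hy => ?_⟩
  have : y b = x b := mem_cyl_xRes_iff.1 hy b (lt_nxt b)
  rw [Set.mem_setOf_eq, this]
  exact hx

theorem mem_of_closed_tree {D : Set (K → K)} (hD : IsClosed[bTop K K] D) {x : K → K}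
    (h : ∀ b : K, ∃ y ∈ D, ∀ i, i < b → y i = x i) : x ∈ D := by
  letI := bTop K K
  rw [← hD.closure_eq]
  rw [mem_closure_iff]
  intro o ho hxo
  obtain ⟨b, hb⟩ := basic_nbhd ho hxo
  obtain ⟨y, hyD, hy⟩ := h b
  exact ⟨y, hb (mem_cyl_xRes_iff.2 hy), hyD⟩

/-! ### Trees of sets and level bounds -/

/-- the tree of initial segments of elements of `D`. -/
def treeOf (D : Set (K → K)) : Set (Nd K K) := {w | ∃ x ∈ D, x ∈ cyl w}

theorem xRes_mem_treeOf {D : Set (K → K)} {x : K → K} (hx : x ∈ D) (b : K) :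
    xRes K x b ∈ treeOf D := ⟨x, hx, mem_cyl_xRes x b⟩

theorem treeOf_subtree (D : Set (K → K)) : IsSubtree K (treeOf D) := by
  rintro p ⟨x, hx, hxp⟩ c h
  exact ⟨x, hx, cyl_mono (ndExt_ndRes p c h) hxp⟩

theorem mem_treeOf_of_ndExt {D : Set (K → K)} {w q : Nd K K} (hq : q ∈ treeOf D)
    (h : NdExt K q w) : w ∈ treeOf D := by
  obtain ⟨x, hx, hxq⟩ := hq
  exact ⟨x, hx, cyl_mono h hxq⟩

/-- level sets of the tree of `D` -/
def Lev (D : Set (K → K)) (b : K) : Set (Set.Iio b → K) :=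
  {t | (⟨b, t⟩ : Nd K K) ∈ treeOf D}

theorem mk_lev_lt (hseg : ∀ b : K, #(Set.Iio b) < #K) (hin : (#K).IsInaccessible)
    {D : Set (K → K)} (hsv : ∀ q : Nd K K, #(splitVals K (treeOf D) q) < #K) (b : K) :
    #(Lev D b) < #K := by
  have hreg := hin.isRegular
  induction b using WellFoundedLT.induction with
  | _ b IH =>
  by_cases hb : ∃ c, c < b
  · by_cases hm : ∃ c, c < b ∧ ∀ d, d < b → d ≤ c
    · -- successor case
      obtain ⟨c, hc, hmax⟩ := hm
      set Ext : ↥(Lev D c) → Set (Set.Iio b → K) := fun t' =>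
        {t ∈ Lev D b | ∀ i : Set.Iio c, t ⟨i.1, lt_trans i.2 hc⟩ = t'.1 i} with hExt
      have hcover : Lev D b ⊆ ⋃ t', Ext t' := by
        intro t ht
        have hmem : (fun i : Set.Iio c => t ⟨i.1, lt_trans i.2 hc⟩) ∈ Lev D c := by
          have := treeOf_subtree D ⟨b, t⟩ ht c hc.le
          exact this
        refine Set.mem_iUnion.2 ⟨⟨_, hmem⟩, ht, fun i => rfl⟩
      have hext : ∀ t', #↥(Ext t') < #K := by
        intro t'
        have hinj : Function.Injective (fun t : ↥(Ext t') =>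
            (⟨t.1 ⟨c, hc⟩, by
              refine ⟨⟨b, t.1⟩, t.2.1, hc, fun i => t.2.2 i, rfl⟩⟩ :
              ↥(splitVals K (treeOf D) ⟨c, t'.1⟩))) := by
          intro t s h
          have hval : t.1 ⟨c, hc⟩ = s.1 ⟨c, hc⟩ := congrArg Subtype.val h
          apply Subtype.ext
          funext i
          rcases lt_or_eq_of_le (hmax i.1 i.2) with hlt | heq
          · have h1 := t.2.2 ⟨i.1, hlt⟩
            have h2 := s.2.2 ⟨i.1, hlt⟩
            rw [show i = (⟨i.1, i.2⟩ : Set.Iio b) from rfl]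
            rw [show (⟨i.1, i.2⟩ : Set.Iio b) = ⟨i.1, lt_trans hlt hc⟩ from rfl] at *
            exact h1.trans h2.symm
          · subst heq
            convert hval using 2
        exact lt_of_le_of_lt (Cardinal.mk_le_of_injective hinj) (hsv ⟨c, t'.1⟩)
      calc #↥(Lev D b) ≤ #↥(⋃ t', Ext t') := Cardinal.mk_le_mk_of_subset hcover
        _ ≤ Cardinal.sum (fun t' => #↥(Ext t')) := Cardinal.mk_iUnion_le_sum_mk
        _ < #K := Cardinal.sum_lt_of_isRegular hreg (IH c hc) hext
    · -- limit case
      push_neg at hm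
      have hlim : ∀ c, c < b → ∃ d, c < d ∧ d < b := by
        intro c hc
        obtain ⟨d, hdb, hcd⟩ := hm c hc
        exact ⟨d, hcd, hdb⟩
      have hres : ∀ (t : ↥(Lev D b)) (c : Set.Iio b),
          (fun i : Set.Iio c.1 => t.1 ⟨i.1, lt_trans i.2 c.2⟩) ∈ Lev D c.1 :=
        fun t c => treeOf_subtree D ⟨b, t.1⟩ t.2 c.1 c.2.le
      have hinj : Function.Injective (fun (t : ↥(Lev D b)) =>
          (fun c : Set.Iio b => (⟨_, hres t c⟩ : ↥(Lev D c.1)))) := by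
        intro t s h
        apply Subtype.ext
        funext i
        obtain ⟨d, hid, hdb⟩ := hlim i.1 i.2
        have := congrArg Subtype.val (congrFun h ⟨d, hdb⟩)
        have h2 := congrFun this ⟨i.1, hid⟩
        exact h2
      have h1 : #↥(Lev D b) ≤ Cardinal.prod (fun c : Set.Iio b => #↥(Lev D c.1)) := by
        rw [← Cardinal.mk_pi]
        exact Cardinal.mk_le_of_injective hinj
      set μ := ⨆ c : Set.Iio b, #↥(Lev D c.1) with hμ
      have hμlt : μ < #K := Cardinal.iSup_lt_of_isRegular hreg (hseg b) fun c => IH c.1 c.2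
      have h2 : Cardinal.prod (fun c : Set.Iio b => #↥(Lev D c.1)) ≤
          Cardinal.prod (fun _ : Set.Iio b => μ) :=
        Cardinal.prod_le_prod _ _ fun c => le_ciSup (Cardinal.bddAbove_range _) c
      have h3 : Cardinal.prod (fun _ : Set.Iio b => μ) = μ ^ #(Set.Iio b) :=
        Cardinal.prod_const' _ _
      have h4 : μ ^ #(Set.Iio b) ≤ ((2 : Cardinal) ^ μ) ^ #(Set.Iio b) :=
        Cardinal.power_le_power_right (Cardinal.cantor μ).le
      have h5 : ((2 : Cardinal) ^ μ) ^ #(Set.Iio b) = (2 : Cardinal) ^ (μ * #(Set.Iio b)) :=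
        Cardinal.power_mul.symm
      have h6 : μ * #(Set.Iio b) < #K := Cardinal.mul_lt_of_lt hin.1.le hμlt (hseg b)
      have h7 : (2 : Cardinal) ^ (μ * #(Set.Iio b)) < #K := hin.isStrongLimit.two_power_lt h6
      calc #↥(Lev D b) ≤ μ ^ #(Set.Iio b) := h1.trans (h2.trans_eq h3)
        _ ≤ (2 : Cardinal) ^ (μ * #(Set.Iio b)) := h4.trans_eq h5
        _ < #K := h7
  · -- base case
    have hsub : (Lev D b).Subsingleton := by
      intro t ht s hs
      funext i
      exact absurd ⟨i.1, i.2⟩ hb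
    exact lt_of_le_of_lt hsub.cardinalMk_le_one (Cardinal.one_lt_aleph0.trans hin.1)

/-! ### κ-compactness from small splitting -/

/-- a set admits a small subcover from `𝒰` -/
def Sm (𝒰 : Set (Set (K → K))) (A : Set (K → K)) : Prop :=
  ∃ 𝒱, 𝒱 ⊆ 𝒰 ∧ #𝒱 < #K ∧ A ⊆ ⋃₀ 𝒱

theorem Sm.mono {𝒰 : Set (Set (K → K))} {A B : Set (K → K)} (hAB : A ⊆ B)
    (h : Sm 𝒰 B) : Sm 𝒰 A := by
  obtain ⟨𝒱, h1, h2, h3⟩ := h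
  exact ⟨𝒱, h1, h2, hAB.trans h3⟩

theorem kCompact_of_small_splitting (hseg : ∀ b : K, #(Set.Iio b) < #K)
    (hin : (#K).IsInaccessible) (htp : TreeProp K)
    {D : Set (K → K)} (hcl : ∀ x : K → K, (∀ b, xRes K x b ∈ treeOf D) → x ∈ D)
    (hsv : ∀ q : Nd K K, #(splitVals K (treeOf D) q) < #K) : KCompact K D := by
  have hreg := hin.isRegular
  have h01 : (1 : Cardinal) < #K := Cardinal.one_lt_aleph0.trans hin.1
  have h0 : (0 : Cardinal) < #K := lt_trans zero_lt_one h01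
  intro 𝒰 hop hcov
  by_contra hnc
  push_neg at hnc
  have hnSm : ¬ Sm 𝒰 D := by
    rintro ⟨𝒱, h1, h2, h3⟩
    exact hnc 𝒱 h1 h2 h3
  -- D is nonempty
  have hDne : D.Nonempty := by
    rcases Set.eq_empty_or_nonempty D with rfl | h
    · exact absurd ⟨∅, Set.empty_subset _, by simpa using h0, by simp⟩ hnSm
    · exact h
  obtain ⟨x₀, hx₀⟩ := hDne
  set Bad : Set (Nd K K) := {w | w ∈ treeOf D ∧ ¬ Sm 𝒰 (D ∩ cyl w)} with hBad
  have hBadSub : IsSubtree K Bad := by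
    rintro p ⟨hp, hns⟩ c h
    refine ⟨treeOf_subtree D p hp c h, fun hs => hns ?_⟩
    exact hs.mono (Set.inter_subset_inter_right D (cyl_mono (ndExt_ndRes p c h)))
  -- extension of bad nodes to every level
  have hext : ∀ w ∈ Bad, ∀ b : K, w.1 ≤ b →
      ∃ t : Set.Iio b → K, (⟨b, t⟩ : Nd K K) ∈ Bad ∧ NdExt K ⟨b, t⟩ w := by
    intro w hw b hb
    by_contra hno
    push_neg at hno
    set E : Set (Set.Iio b → K) := {t | t ∈ Lev D b ∧ NdExt K ⟨b, t⟩ w} with hE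
    have hEgood : ∀ t : ↥E, Sm 𝒰 (D ∩ cyl ⟨b, t.1⟩) := by
      intro t
      by_contra hbad
      exact hno t.1 ⟨t.2.1, hbad⟩ t.2.2
    choose 𝒱f h1 h2 h3 using hEgood
    have hcov2 : D ∩ cyl w ⊆ ⋃₀ (⋃ t : ↥E, 𝒱f t) := by
      intro x hx
      have hxt : (fun i : Set.Iio b => x i.1) ∈ E := by
        constructor
        · exact xRes_mem_treeOf hx.1 b
        · exact xRes_mem_cyl hx.2 hb
      have : x ∈ D ∩ cyl ⟨b, fun i : Set.Iio b => x i.1⟩ := ⟨hx.1, mem_cyl_xRes x b⟩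
      obtain ⟨V, hV, hxV⟩ := h3 ⟨_, hxt⟩ this
      exact ⟨V, Set.mem_iUnion.2 ⟨⟨_, hxt⟩, hV⟩, hxV⟩
    have hsize : #(⋃ t : ↥E, 𝒱f t) < #K := by
      refine lt_of_le_of_lt Cardinal.mk_iUnion_le_sum_mk ?_
      refine Cardinal.sum_lt_of_isRegular hreg ?_ fun t => h2 t
      refine lt_of_le_of_lt ?_ (mk_lev_lt hseg hin hsv b)
      exact Cardinal.mk_le_mk_of_subset fun t ht => ht.1
    have hsubU : (⋃ t : ↥E, 𝒱f t) ⊆ 𝒰 := by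
      intro V hV
      obtain ⟨t, ht⟩ := Set.mem_iUnion.1 hV
      exact h1 t ht
    exact hw.2 ⟨_, hsubU, hsize, hcov2⟩
  -- the root is bad
  set b0 : K := (wfK).min Set.univ ⟨Classical.arbitrary K, trivial⟩ with hb0
  have hb0le : ∀ b : K, b0 ≤ b := fun b =>
    not_lt.1 ((wfK).not_lt_min Set.univ (Set.mem_univ b))
  have hcylroot : ∀ y : K → K, y ∈ cyl (xRes K x₀ b0) := by
    intro y i
    exact absurd i.2 (not_lt.2 (hb0le i.1))
  have hroot : xRes K x₀ b0 ∈ Bad := by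
    refine ⟨xRes_mem_treeOf hx₀ b0, fun hs => hnSm ?_⟩
    exact hs.mono (show D ⊆ D ∩ cyl (xRes K x₀ b0) from fun x hx => ⟨hx, hcylroot x⟩)
  -- Bad is a K-tree, apply the tree property
  have hktree : KTree K Bad := by
    constructor
    · intro b
      obtain ⟨t, ht, -⟩ := hext _ hroot b (hb0le b)
      exact ⟨t, ht⟩
    · intro b
      refine lt_of_le_of_lt ?_ (mk_lev_lt hseg hin hsv b)
      exact Cardinal.mk_le_mk_of_subset fun t ht => ht.1
  obtain ⟨x, hx⟩ := htp Bad hBadSub hktree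
  have hxD : x ∈ D := hcl x fun b => (hx b).1
  obtain ⟨U, hU, hxU⟩ := hcov hxD
  obtain ⟨b, hb⟩ := basic_nbhd (hop U hU) hxU
  refine (hx b).2 ⟨{U}, Set.singleton_subset_iff.2 hU, ?_, ?_⟩
  · simpa using h01
  · intro y hy
    exact ⟨U, rfl, hb hy.2⟩

/-! ### The splitting lemma -/

theorem split_exists [NoMaxOrder K] (hseg : ∀ b : K, #(Set.Iio b) < #K)
    (hin : (#K).IsInaccessible) (htp : TreeProp K)
    (gf : (K → K) → (K → K)) (hginj : Function.Injective gf)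
    (hgbasic : ∀ z : K → K, ∀ t : Nd K K, gf z ∈ cyl t →
      ∃ l, ∀ y ∈ cyl (xRes K z l), gf y ∈ cyl t)
    (hgopen : ∀ b a : K, ∃ W, IsOpen[bTop K K] W ∧ ∀ z : K → K, (gf z ∈ W ↔ z b = a))
    (hgclosed : ∀ t : Nd K K, ∀ x : K → K,
      (∀ b, ∃ z ∈ cyl t, ∀ i, i < b → gf z i = x i) → ∃ z ∈ cyl t, gf z = x)
    (p : Nd K K × Nd K K) (δ : K)
    (hInv : ∀ z, z ∈ cyl p.1 → gf z ∈ cyl p.2) :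
    ∃ γ : K, ∃ q : Nd K K, q.1 = γ ∧ p.2.1 ≤ γ ∧ NdExt K q p.2 ∧
      ∃ f : K → Nd K K × Nd K K, ∀ a : K,
        (∀ z, z ∈ cyl (f a).1 → gf z ∈ cyl (f a).2) ∧
        NdExt K (f a).1 p.1 ∧ NdExt K (f a).2 q ∧ γ < (f a).2.1 ∧ δ ≤ (f a).2.1 ∧
        ∀ a', a ≠ a' → va (f a).2 γ ≠ va (f a').2 γ := by
  set D : Set (K → K) := gf '' cyl p.1 with hD
  have hDp2 : D ⊆ cyl p.2 := by rintro x ⟨z, hz, rfl⟩; exact hInv z hz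
  have htree_cl : ∀ x : K → K, (∀ b, xRes K x b ∈ treeOf D) → x ∈ D := by
    intro x hx
    have : ∀ b, ∃ z ∈ cyl p.1, ∀ i, i < b → gf z i = x i := by
      intro b
      obtain ⟨y, hyD, hycyl⟩ := hx b
      obtain ⟨z, hz, rfl⟩ := hyD
      exact ⟨z, hz, mem_cyl_xRes_iff.1 hycyl⟩
    obtain ⟨z, hz, rfl⟩ := hgclosed p.1 x this
    exact ⟨z, hz, rfl⟩
  -- D is not κ-compact
  have hnK : ¬ KCompact K D := by
    intro hK
    set b := p.1.1 with hb
    choose W hWop hWmem using hgopen b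
    have hcov : D ⊆ ⋃₀ {V | ∃ a, V = W a} := by
      rintro x ⟨z, hz, rfl⟩
      exact ⟨W (z b), ⟨z b, rfl⟩, (hWmem (z b) z).2 rfl⟩
    obtain ⟨𝒱, h𝒱sub, h𝒱size, h𝒱cov⟩ := hK _ (by rintro V ⟨a, rfl⟩; exact hWop a) hcov
    set Fa : ↥𝒱 → K := fun V => Classical.choose (h𝒱sub V.2) with hFa
    have hFaspec : ∀ V : ↥𝒱, V.1 = W (Fa V) := fun V => Classical.choose_spec (h𝒱sub V.2)
    have hA : #(Set.range Fa) < #K := lt_of_le_of_lt Cardinal.mk_range_le h𝒱size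
    have hex : ∃ a₀, a₀ ∉ Set.range Fa := by
      by_contra hct
      push_neg at hct
      have : Set.range Fa = Set.univ := Set.eq_univ_of_forall hct
      rw [this, Cardinal.mk_univ] at hA
      exact lt_irrefl _ hA
    obtain ⟨a₀, ha₀⟩ := hex
    set x : K → K := fun j => if h : j < p.1.1 then p.1.2 ⟨j, h⟩ else a₀ with hx
    have hxc : x ∈ cyl p.1 := fun i => dif_pos i.2
    have hgx : gf x ∈ ⋃₀ 𝒱 := h𝒱cov ⟨x, hxc, rfl⟩
    obtain ⟨V, hV, hgxV⟩ := hgx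
    have hVW : V = W (Fa ⟨V, hV⟩) := hFaspec ⟨V, hV⟩
    rw [hVW] at hgxV
    have hxb : x b = Fa ⟨V, hV⟩ := (hWmem _ x).1 hgxV
    have hxb0 : x b = a₀ := dif_neg (lt_irrefl b)
    exact ha₀ ⟨⟨V, hV⟩, by rw [← hxb, hxb0]⟩
  -- so some node has large splitting
  have hbig : ∃ q : Nd K K, #K ≤ #(splitVals K (treeOf D) q) := by
    by_contra hall
    push_neg at hall
    exact hnK (kCompact_of_small_splitting hseg hin htp htree_cl hall)
  obtain ⟨qq, hqq⟩ := hbig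
  -- facts about the splitting node
  have hval_of_mem : ∀ a ∈ splitVals K (treeOf D) qq,
      ∃ y ∈ D, (∀ i, i < qq.1 → y i = va qq i) ∧ y qq.1 = a := by
    intro a ha
    obtain ⟨q', hq'T, hlt, hagr, hval⟩ := ha
    obtain ⟨y, hyD, hycyl⟩ := hq'T
    refine ⟨y, hyD, fun i hi => ?_, ?_⟩
    · have h1 : y i = q'.2 ⟨i, lt_trans hi hlt⟩ := hycyl ⟨i, lt_trans hi hlt⟩
      rw [h1, hagr ⟨i, hi⟩, va_eq qq hi]
    · rw [hycyl ⟨qq.1, hlt⟩, hval]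
  have hne : (splitVals K (treeOf D) qq).Nonempty := by
    rcases Set.eq_empty_or_nonempty (splitVals K (treeOf D) qq) with hemp | h
    · rw [hemp] at hqq
      simp only [Cardinal.mk_emptyCollection] at hqq
      exact absurd (lt_of_le_of_lt hqq (lt_trans Cardinal.aleph0_pos hin.1)) (lt_irrefl _)
    · exact h
  have hqlen : p.2.1 ≤ qq.1 := by
    by_contra hlt
    push_neg at hlt
    have hsub : (splitVals K (treeOf D) qq).Subsingleton := by
      intro a ha a' ha'
      obtain ⟨y, hyD, -, hval⟩ := hval_of_mem a ha
      obtain ⟨y', hy'D, -, hval'⟩ := hval_of_mem a' ha'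
      rw [← hval, ← hval']
      rw [mem_cyl.1 (hDp2 hyD) qq.1 hlt, mem_cyl.1 (hDp2 hy'D) qq.1 hlt]
    have h1 := hsub.cardinalMk_le_one
    exact absurd (hqq.trans h1) (not_le.2 (Cardinal.one_lt_aleph0.trans hin.1))
  have hqqext : NdExt K qq p.2 := by
    obtain ⟨a₁, ha₁⟩ := hne
    obtain ⟨y, hyD, hyagr, -⟩ := hval_of_mem a₁ ha₁
    refine ndExt_iff_va.2 ⟨hqlen, fun i hi => ?_⟩
    rw [← hyagr i (lt_of_lt_of_le hi hqlen)]
    exact mem_cyl.1 (hDp2 hyD) i hi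
  set γ := qq.1 with hγ
  obtain ⟨ι⟩ := (Cardinal.le_def _ _).1 hqq
  -- witnesses
  have hw : ∀ a : K, ∃ z : K → K, z ∈ cyl p.1 ∧ gf z γ = (ι a).1 ∧
      ∀ i, i < γ → gf z i = va qq i := by
    intro a
    obtain ⟨y, hyD, hyagr, hyval⟩ := hval_of_mem (ι a).1 (ι a).2
    obtain ⟨z, hz, rfl⟩ := hyD
    exact ⟨z, hz, hyval, hyagr⟩
  choose zf hz1 hz2 hz3 using hw
  set l' := max δ (nxt γ) with hl'
  have hγl' : γ < l' := lt_of_lt_of_le (lt_nxt γ) (le_max_right _ _)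
  set tnode : K → Nd K K := fun a => xRes K (gf (zf a)) l' with htnode
  have hcont : ∀ a : K, ∃ l, ∀ y ∈ cyl (xRes K (zf a) l), gf y ∈ cyl (tnode a) := by
    intro a
    exact hgbasic (zf a) (tnode a) (mem_cyl_xRes _ _)
  choose lf hlf using hcont
  set snode : K → Nd K K := fun a => xRes K (zf a) (max (lf a) p.1.1) with hsnode
  refine ⟨γ, qq, rfl, hqlen, hqqext, fun a => (snode a, tnode a), fun a => ?_⟩
  have hsl : ∀ a, NdExt K (snode a) (xRes K (zf a) (lf a)) :=
    fun a => ⟨le_max_left _ _, fun i => rfl⟩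
  refine ⟨?_, ?_, ?_, ?_, ?_, ?_⟩
  · intro z hz
    exact hlf a z (cyl_mono (hsl a) hz)
  · refine ndExt_iff_va.2 ⟨le_max_right _ _, fun i hi => ?_⟩
    rw [va_xRes _ (lt_of_lt_of_le hi (le_max_right _ _))]
    exact mem_cyl.1 (hz1 a) i hi
  · refine ndExt_iff_va.2 ⟨hγl'.le, fun i hi => ?_⟩
    rw [va_xRes _ (lt_trans hi hγl')]
    exact hz3 a i hi
  · exact hγl'
  · exact le_max_left _ _
  · intro a' haa
    rw [va_xRes _ hγl', va_xRes _ hγl', hz2 a, hz2 a']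
    intro hvv
    exact haa (ι.injective (Subtype.ext hvv))

/-! ### The recursion -/

/-- restriction of a level function -/
def resf {b : K} (u : Set.Iio b → K) {c : K} (hc : c ≤ b) : Set.Iio c → K :=
  fun i => u ⟨i.1, lt_of_lt_of_le i.2 hc⟩

/-- the pair invariant -/
def Inv (gf : (K → K) → (K → K)) (P : Nd K K × Nd K K) : Prop :=
  ∀ z, z ∈ cyl P.1 → gf z ∈ cyl P.2

/-- specification of the splitting step function -/
def StepSpec (gf : (K → K) → (K → K)) (step : Nd K K × Nd K K → K → K → Nd K K × Nd K K) :
    Prop :=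
  ∀ P (δ : K), Inv gf P → ∃ γ q, q.1 = γ ∧ P.2.1 ≤ γ ∧ NdExt K q P.2 ∧
    ∀ a, Inv gf (step P a δ) ∧ NdExt K (step P a δ).1 P.1 ∧ NdExt K (step P a δ).2 q ∧
      γ < (step P a δ).2.1 ∧ δ ≤ (step P a δ).2.1 ∧
      ∀ a', a ≠ a' → va (step P a δ).2 γ ≠ va (step P a' δ).2 γ

/-- the transfinite recursion -/
def F (gf : (K → K) → (K → K)) (step : Nd K K × Nd K K → K → K → Nd K K × Nd K K) :
    (b : K) → (Set.Iio b → K) → Nd K K × Nd K K :=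
  WellFounded.fix wfK fun b IH u =>
    if _hb : ∃ c, c < b then
      if hm : ∃ c, c < b ∧ ∀ d, d < b → d ≤ c then
        step (IH (Classical.choose hm) (Classical.choose_spec hm).1
            (resf u (Classical.choose_spec hm).1.le))
          (u ⟨Classical.choose hm, (Classical.choose_spec hm).1⟩) b
      else
        let σ : K := lub {l | ∃ (c : K) (hc : c < b), (IH c hc (resf u hc.le)).1.1 = l}
        let τ : K := lub {l | ∃ (c : K) (hc : c < b), (IH c hc (resf u hc.le)).2.1 = l}
        let z : K → K := fun j =>
          if hj : ∃ (c : K) (hc : c < b), j < (IH c hc (resf u hc.le)).1.1 then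
            va (IH (Classical.choose hj) (Classical.choose (Classical.choose_spec hj))
              (resf u (Classical.choose (Classical.choose_spec hj)).le)).1 j
          else Classical.arbitrary K
        (⟨σ, fun i => z i.1⟩, ⟨τ, fun i => gf z i.1⟩)
    else (⟨b, u⟩, ⟨b, u⟩)

variable {gf : (K → K) → (K → K)} {step : Nd K K × Nd K K → K → K → Nd K K × Nd K K}

theorem F_eq (b : K) (u : Set.Iio b → K) :
    F gf step b u =
      (if _hb : ∃ c, c < b then
        if hm : ∃ c, c < b ∧ ∀ d, d < b → d ≤ c then
          step (F gf step (Classical.choose hm) (resf u (Classical.choose_spec hm).1.le))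
            (u ⟨Classical.choose hm, (Classical.choose_spec hm).1⟩) b
        else
          let σ : K := lub {l | ∃ (c : K) (hc : c < b), (F gf step c (resf u hc.le)).1.1 = l}
          let τ : K := lub {l | ∃ (c : K) (hc : c < b), (F gf step c (resf u hc.le)).2.1 = l}
          let z : K → K := fun j =>
            if hj : ∃ (c : K) (hc : c < b), j < (F gf step c (resf u hc.le)).1.1 then
              va (F gf step (Classical.choose hj)
                (resf u (Classical.choose (Classical.choose_spec hj)).le)).1 j
            else Classical.arbitrary K
          (⟨σ, fun i => z i.1⟩, ⟨τ, fun i => gf z i.1⟩)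
      else (⟨b, u⟩, ⟨b, u⟩)) := by
  have h := WellFounded.fix_eq wfK (fun (b : K)
      (IH : ∀ c, c < b → (Set.Iio c → K) → Nd K K × Nd K K) (u : Set.Iio b → K) =>
    if _hb : ∃ c, c < b then
      if hm : ∃ c, c < b ∧ ∀ d, d < b → d ≤ c then
        step (IH (Classical.choose hm) (Classical.choose_spec hm).1
            (resf u (Classical.choose_spec hm).1.le))
          (u ⟨Classical.choose hm, (Classical.choose_spec hm).1⟩) b
      else
        let σ : K := lub {l | ∃ (c : K) (hc : c < b), (IH c hc (resf u hc.le)).1.1 = l}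
        let τ : K := lub {l | ∃ (c : K) (hc : c < b), (IH c hc (resf u hc.le)).2.1 = l}
        let z : K → K := fun j =>
          if hj : ∃ (c : K) (hc : c < b), j < (IH c hc (resf u hc.le)).1.1 then
            va (IH (Classical.choose hj) (Classical.choose (Classical.choose_spec hj))
              (resf u (Classical.choose (Classical.choose_spec hj)).le)).1 j
          else Classical.arbitrary K
        (⟨σ, fun i => z i.1⟩, ⟨τ, fun i => gf z i.1⟩)
    else (⟨b, u⟩, ⟨b, u⟩)) b
  exact congrFun h u

theorem F_base {b : K} (hb : ¬ ∃ c, c < b) (u : Set.Iio b → K) :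
    F gf step b u = (⟨b, u⟩, ⟨b, u⟩) := by
  rw [F_eq, dif_neg hb]

theorem F_succ {c b : K} (hc : c < b) (hmax : ∀ d, d < b → d ≤ c) (u : Set.Iio b → K) :
    F gf step b u = step (F gf step c (resf u hc.le)) (u ⟨c, hc⟩) b := by
  have hm : ∃ c, c < b ∧ ∀ d, d < b → d ≤ c := ⟨c, hc, hmax⟩
  rw [F_eq, dif_pos ⟨c, hc⟩, dif_pos hm]
  have key : ∀ (c' : K) (hc' : c' < b), c' = c →
      step (F gf step c' (resf u hc'.le)) (u ⟨c', hc'⟩) b =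
      step (F gf step c (resf u hc.le)) (u ⟨c, hc⟩) b := by
    rintro c' hc' rfl
    rfl
  exact key _ (Classical.choose_spec hm).1
    (le_antisymm (hmax _ (Classical.choose_spec hm).1)
      ((Classical.choose_spec hm).2 c hc))

theorem F_limit {b : K} (hb : ∃ c, c < b) (hm : ¬ ∃ c, c < b ∧ ∀ d, d < b → d ≤ c)
    (u : Set.Iio b → K) :
    ∃ z : K → K,
      F gf step b u =
        (⟨lub {l | ∃ (c : K) (hc : c < b), (F gf step c (resf u hc.le)).1.1 = l},
            fun i => z i.1⟩,
         ⟨lub {l | ∃ (c : K) (hc : c < b), (F gf step c (resf u hc.le)).2.1 = l},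
            fun i => gf z i.1⟩) ∧
      ∀ j : K, (∃ (c : K) (hc : c < b), j < (F gf step c (resf u hc.le)).1.1) →
        ∃ (c : K) (hc : c < b), j < (F gf step c (resf u hc.le)).1.1 ∧
          z j = va (F gf step c (resf u hc.le)).1 j := by
  rw [F_eq, dif_pos hb, dif_neg hm]
  refine ⟨fun j =>
    if hj : ∃ (c : K) (hc : c < b), j < (F gf step c (resf u hc.le)).1.1 then
      va (F gf step (Classical.choose hj)
        (resf u (Classical.choose (Classical.choose_spec hj)).le)).1 j
    else Classical.arbitrary K, rfl, ?_⟩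
  intro j hj
  exact ⟨Classical.choose hj, Classical.choose (Classical.choose_spec hj),
    Classical.choose_spec (Classical.choose_spec hj), dif_pos hj⟩

theorem F_master (hseg : ∀ b : K, #(Set.Iio b) < #K) (hreg : (#K).IsRegular)
    (hstep : StepSpec gf step) (b : K) :
    ∀ u : Set.Iio b → K,
      Inv gf (F gf step b u) ∧ b ≤ (F gf step b u).2.1 ∧
      ∀ c (hc : c < b), NdExt K (F gf step b u).1 (F gf step c (resf u hc.le)).1 ∧
        NdExt K (F gf step b u).2 (F gf step c (resf u hc.le)).2 := by
  induction b using WellFoundedLT.induction with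
  | _ b IH =>
  intro u
  by_cases hb : ∃ c, c < b
  · by_cases hm : ∃ c, c < b ∧ ∀ d, d < b → d ≤ c
    · -- successor case
      obtain ⟨c, hc, hmax⟩ := hm
      rw [F_succ hc hmax u]
      have hIH := IH c hc (resf u hc.le)
      obtain ⟨γ, q, -, -, hq, hf⟩ := hstep (F gf step c (resf u hc.le)) b hIH.1
      obtain ⟨hi1, hi2, hi3, -, hi5, -⟩ := hf (u ⟨c, hc⟩)
      refine ⟨hi1, hi5, fun d hd => ?_⟩
      rcases lt_or_eq_of_le (hmax d hd) with hdc | rfl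
      · have h2 := hIH.2.2 d hdc
        exact ⟨ndExt_trans h2.1 hi2, ndExt_trans h2.2 (ndExt_trans hq hi3)⟩
      · exact ⟨hi2, ndExt_trans hq hi3⟩
    · -- limit case
      obtain ⟨z, hFeq, hz⟩ := F_limit hb hm u
      have hlim : ∀ c, c < b → ∃ d, c < d ∧ d < b := by
        intro c hc
        push_neg at hm
        obtain ⟨d, hdb, hcd⟩ := hm c hc
        exact ⟨d, hcd, hdb⟩
      set Sset := {l | ∃ (c : K) (hc : c < b), (F gf step c (resf u hc.le)).1.1 = l} with hSset
      set Tset := {l | ∃ (c : K) (hc : c < b), (F gf step c (resf u hc.le)).2.1 = l} with hTset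
      have hbddS : BddAbove Sset := by
        apply bddAbove_of_small hseg hreg
        have hsub : Sset ⊆ Set.range (fun c : Set.Iio b =>
            (F gf step c.1 (resf u c.2.le)).1.1) := by
          rintro l ⟨c, hc, rfl⟩
          exact ⟨⟨c, hc⟩, rfl⟩
        exact lt_of_le_of_lt ((Cardinal.mk_le_mk_of_subset hsub).trans Cardinal.mk_range_le)
          (hseg b)
      have hbddT : BddAbove Tset := by
        apply bddAbove_of_small hseg hreg
        have hsub : Tset ⊆ Set.range (fun c : Set.Iio b =>
            (F gf step c.1 (resf u c.2.le)).2.1) := by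
          rintro l ⟨c, hc, rfl⟩
          exact ⟨⟨c, hc⟩, rfl⟩
        exact lt_of_le_of_lt ((Cardinal.mk_le_mk_of_subset hsub).trans Cardinal.mk_range_le)
          (hseg b)
      have hF1 : (F gf step b u).1 = ⟨lub Sset, fun i => z i.1⟩ := by rw [hFeq]
      have hF2 : (F gf step b u).2 = ⟨lub Tset, fun i => gf z i.1⟩ := by rw [hFeq]
      have hcomp : ∀ (c : K) (hc : c < b) (c' : K) (hc' : c' < b) (j : K),
          j < (F gf step c (resf u hc.le)).1.1 → j < (F gf step c' (resf u hc'.le)).1.1 →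
          va (F gf step c (resf u hc.le)).1 j = va (F gf step c' (resf u hc'.le)).1 j := by
        intro c hc c' hc' j hj hj'
        rcases lt_trichotomy c c' with h | rfl | h
        · have h1 := va_eq_of_ndExt ((IH c' hc' (resf u hc'.le)).2.2 c h).1 hj
          exact h1.symm
        · rfl
        · have h1 := va_eq_of_ndExt ((IH c hc (resf u hc.le)).2.2 c' h).1 hj'
          exact h1
      have hz' : ∀ (c : K) (hc : c < b) (j : K), j < (F gf step c (resf u hc.le)).1.1 →
          z j = va (F gf step c (resf u hc.le)).1 j := by
        intro c hc j hj
        obtain ⟨c', hc', hj', hzj⟩ := hz j ⟨c, hc, hj⟩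
        rw [hzj]
        exact hcomp c' hc' c hc j hj' hj
      have hzcyl : ∀ (c : K) (hc : c < b), z ∈ cyl (F gf step c (resf u hc.le)).1 :=
        fun c hc => mem_cyl.2 fun j hj => hz' c hc j hj
      have hlenS : ∀ (c : K) (hc : c < b), (F gf step c (resf u hc.le)).1.1 ≤ lub Sset :=
        fun c hc => le_lub hbddS ⟨c, hc, rfl⟩
      have hlenT : ∀ (c : K) (hc : c < b), (F gf step c (resf u hc.le)).2.1 ≤ lub Tset :=
        fun c hc => le_lub hbddT ⟨c, hc, rfl⟩
      have hycyl : ∀ y, y ∈ cyl (F gf step b u).1 → ∀ (c : K) (hc : c < b),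
          y ∈ cyl (F gf step c (resf u hc.le)).1 := by
        intro y hy c hc
        refine mem_cyl.2 fun j hj => ?_
        have hjσ : j < lub Sset := lt_of_lt_of_le hj (hlenS c hc)
        have h1 : y j = va (F gf step b u).1 j :=
          mem_cyl.1 hy j (by rw [hF1]; exact hjσ)
        rw [h1, hF1, ← hz' c hc j hj]
        exact va_eq _ hjσ
      have hInvb : Inv gf (F gf step b u) := by
        intro y hy
        refine mem_cyl.2 fun i hi => ?_
        have hiτ : i < lub Tset := by rw [hF2] at hi; exact hi
        obtain ⟨l, hl, hil⟩ := exists_lt_of_lt_lub hbddT hiτ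
        obtain ⟨c, hc, rfl⟩ := hl
        have h1 : gf y ∈ cyl (F gf step c (resf u hc.le)).2 :=
          (IH c hc _).1 y (hycyl y hy c hc)
        have h2 : gf z ∈ cyl (F gf step c (resf u hc.le)).2 :=
          (IH c hc _).1 z (hzcyl c hc)
        rw [mem_cyl.1 h1 i hil, ← mem_cyl.1 h2 i hil, hF2]
        exact (va_eq (⟨lub Tset, fun i => gf z i.1⟩ : Nd K K) hiτ).symm
      have hbτ : b ≤ (F gf step b u).2.1 := by
        rw [hF2]
        by_contra hlt
        push_neg at hlt
        obtain ⟨d, hτd, hdb⟩ := hlim _ hlt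
        have h1 : d ≤ (F gf step d (resf u hdb.le)).2.1 := (IH d hdb _).2.1
        exact absurd (lt_of_lt_of_le hτd (h1.trans (hlenT d hdb))) (lt_irrefl _)
      refine ⟨hInvb, hbτ, fun c hc => ⟨?_, ?_⟩⟩
      · refine ndExt_iff_va.2 ⟨by rw [hF1]; exact hlenS c hc, fun i hi => ?_⟩
        rw [hF1, va_eq _ (lt_of_lt_of_le hi (hlenS c hc))]
        exact hz' c hc i hi
      · refine ndExt_iff_va.2 ⟨by rw [hF2]; exact hlenT c hc, fun i hi => ?_⟩
        rw [hF2, va_eq _ (lt_of_lt_of_le hi (hlenT c hc))]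
        have h2 : gf z ∈ cyl (F gf step c (resf u hc.le)).2 :=
          (IH c hc _).1 z (hzcyl c hc)
        exact mem_cyl.1 h2 i hi
  · -- base case
    rw [F_base hb]
    exact ⟨fun z _ i => absurd (⟨i.1, i.2⟩ : ∃ c, c < b) hb, le_rfl,
      fun c hc => absurd ⟨c, hc⟩ hb⟩

/-! ### More node helpers -/

theorem ndRes_self (u : Nd K K) (h : u.1 ≤ u.1) : ndRes K u u.1 h = u := by
  rcases u with ⟨b, f⟩
  rfl

theorem va_ndRes {t : Nd K K} {c : K} (hc : c ≤ t.1) {j : K} (hj : j < c) :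
    va (ndRes K t c hc) j = va t j := by
  rw [va_eq (ndRes K t c hc) (show j < (ndRes K t c hc).1 from hj),
    va_eq t (lt_of_lt_of_le hj hc)]
  rfl

theorem ndRes_eq_of_ndExt {q p : Nd K K} (h : NdExt K q p) :
    ndRes K q p.1 h.1 = p := by
  refine (nd_eq_iff (q := ndRes K q p.1 h.1) (p := p) rfl).2 fun i hi => ?_
  rw [va_ndRes h.1 hi]
  exact va_eq_of_ndExt h hi

theorem F_chd [NoMaxOrder K] (u : Nd K K) (a : K) :
    F gf step (chd u a).1 (chd u a).2 = step (F gf step u.1 u.2) a (nxt u.1) := by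
  have h1 : u.1 < nxt u.1 := lt_nxt u.1
  have hmax : ∀ d, d < nxt u.1 → d ≤ u.1 := fun d hd => lt_nxt_iff.1 hd
  have heq := F_succ (gf := gf) (step := step) h1 hmax (chd u a).2
  have e1 : resf (chd u a).2 h1.le = u.2 := funext fun i => dif_pos i.2
  have e2 : (chd u a).2 ⟨u.1, h1⟩ = a := dif_neg (lt_irrefl u.1)
  exact heq.trans (congrArg₂ (fun x y => step (F gf step u.1 x) y (nxt u.1)) e1 e2)

/-! ### Main construction -/

theorem main_construction [NoMaxOrder K] (hseg : ∀ b : K, #(Set.Iio b) < #K)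
    (hin : (#K).IsInaccessible) (htp : TreeProp K)
    (gf : (K → K) → (K → K)) (hginj : Function.Injective gf)
    (hgbasic : ∀ z : K → K, ∀ t : Nd K K, gf z ∈ cyl t →
      ∃ l, ∀ y ∈ cyl (xRes K z l), gf y ∈ cyl t)
    (hgopen : ∀ b a : K, ∃ W, IsOpen[bTop K K] W ∧ ∀ z : K → K, (gf z ∈ W ↔ z b = a))
    (hgclosed : ∀ t : Nd K K, ∀ x : K → K,
      (∀ b, ∃ z ∈ cyl t, ∀ i, i < b → gf z i = x i) → ∃ z ∈ cyl t, gf z = x)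
    (T : Set (Nd K K)) (hgT : ∀ (z : K → K) (b : K), xRes K (gf z) b ∈ T) :
    ∃ S, S ⊆ T ∧ MillerTree K S := by
  have hreg := hin.isRegular
  -- build the step function
  have hstepex : ∀ (P : Nd K K × Nd K K) (δ : K), ∃ out : K → Nd K K × Nd K K,
      Inv gf P → ∃ γ q, q.1 = γ ∧ P.2.1 ≤ γ ∧ NdExt K q P.2 ∧
        ∀ a, Inv gf (out a) ∧ NdExt K (out a).1 P.1 ∧ NdExt K (out a).2 q ∧
          γ < (out a).2.1 ∧ δ ≤ (out a).2.1 ∧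
          ∀ a', a ≠ a' → va (out a).2 γ ≠ va (out a').2 γ := by
    intro P δ
    by_cases h : Inv gf P
    · obtain ⟨γ, q, h1, h2, h3, f, hf⟩ :=
        split_exists hseg hin htp gf hginj hgbasic hgopen hgclosed P δ h
      exact ⟨f, fun _ => ⟨γ, q, h1, h2, h3, hf⟩⟩
    · exact ⟨fun _ => P, fun hI => absurd hI h⟩
  choose stepF hstepF using hstepex
  set step : Nd K K × Nd K K → K → K → Nd K K × Nd K K := fun P a δ => stepF P δ a
    with hstepdef
  have hstep : StepSpec gf step := fun P δ hI => hstepF P δ hI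
  have hmaster := F_master (gf := gf) (step := step) hseg hreg hstep
  -- target nodes
  set TF : Nd K K → Nd K K := fun u => (F gf step u.1 u.2).2 with hTFdef
  have hmono' : ∀ (u : Nd K K) (c : K) (hc : c ≤ u.1),
      NdExt K (TF u) (TF (ndRes K u c hc)) := by
    intro u c hc
    rcases lt_or_eq_of_le hc with h | h
    · exact ((hmaster u.1 u.2).2.2 c h).2
    · subst h
      rw [ndRes_self u hc]
      exact ndExt_refl _
  have hlenle : ∀ u : Nd K K, u.1 ≤ (TF u).1 := fun u => (hmaster u.1 u.2).2.1
  -- every TF node lies on a branch through the image of gf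
  have hbranch : ∀ u : Nd K K, ∃ z : K → K, gf z ∈ cyl (TF u) := by
    intro u
    set z : K → K := fun j =>
      if h : j < (F gf step u.1 u.2).1.1 then (F gf step u.1 u.2).1.2 ⟨j, h⟩
      else Classical.arbitrary K with hzdef
    have hz : z ∈ cyl (F gf step u.1 u.2).1 := fun i => dif_pos i.2
    exact ⟨z, (hmaster u.1 u.2).1 z hz⟩
  -- the Miller subtree
  set S : Set (Nd K K) := {w | ∃ u : Nd K K, NdExt K (TF u) w} with hSdef
  have hST : S ⊆ T := by
    rintro w ⟨u, hu⟩
    obtain ⟨z, hz⟩ := hbranch u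
    have hw : w = xRes K (gf z) w.1 := by
      refine (nd_eq_iff (q := w) (p := xRes K (gf z) w.1) rfl).2 fun i hi => ?_
      rw [va_xRes _ (show i < w.1 from hi), ← va_eq_of_ndExt hu hi]
      exact (mem_cyl.1 hz i (lt_of_lt_of_le hi hu.1)).symm
    rw [hw]
    exact hgT z w.1
  have hsub : IsSubtree K S := by
    rintro p ⟨u, hu⟩ c h
    exact ⟨u, ndExt_ndRes_of_ndExt hu c h⟩
  have hSne : S.Nonempty :=
    ⟨TF ⟨Classical.arbitrary K, fun _ => Classical.arbitrary K⟩,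
      ⟨Classical.arbitrary K, fun _ => Classical.arbitrary K⟩, ndExt_refl _⟩
  -- splitting data at every index node
  have hsplit : ∀ u : Nd K K, ∃ (γ : K) (qn : Nd K K), qn.1 = γ ∧ NdExt K qn (TF u) ∧
      (TF u).1 ≤ γ ∧ ∀ a,
      NdExt K (TF (chd u a)) qn ∧ γ < (TF (chd u a)).1 ∧
      ∀ a', a ≠ a' → va (TF (chd u a)) γ ≠ va (TF (chd u a')) γ := by
    intro u
    obtain ⟨γ, qn, h1, h2, h3, hf⟩ :=
      hstep (F gf step u.1 u.2) (nxt u.1) (hmaster u.1 u.2).1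
    have hrw : ∀ a, TF (chd u a) = (step (F gf step u.1 u.2) a (nxt u.1)).2 :=
      fun a => congrArg Prod.snd (F_chd u a)
    refine ⟨γ, qn, h1, h3, h2, fun a => ?_⟩
    obtain ⟨-, -, hx3, hx4, -, hx6⟩ := hf a
    refine ⟨by rw [hrw a]; exact hx3, by rw [hrw a]; exact hx4, fun a' haa => ?_⟩
    obtain ⟨-, -, -, -, -, hx6'⟩ := hf a
    rw [hrw a, hrw a']
    exact hx6 a' haa
  choose γf qf hq1 hq3 hq2 hq4 using hsplit
  -- comparability
  have hdiv : ∀ v v' : Nd K K, ¬ NdExt K v v' → ¬ NdExt K v' v →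
      ∃ j, j < (TF v).1 ∧ j < (TF v').1 ∧ va (TF v) j ≠ va (TF v') j := by
    intro v v' hnv hnv'
    set A := {d : K | ∃ (hd : d < v.1) (hd' : d < v'.1), v.2 ⟨d, hd⟩ ≠ v'.2 ⟨d, hd'⟩} with hA
    have hAne : A.Nonempty := by
      by_contra hAe
      have hagr : ∀ (d : K) (hd : d < v.1) (hd' : d < v'.1), v.2 ⟨d, hd⟩ = v'.2 ⟨d, hd'⟩ := by
        intro d hd hd'
        by_contra hne
        exact hAe ⟨d, hd, hd', hne⟩
      rcases le_total v.1 v'.1 with h | h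
      · exact hnv' ⟨h, fun i => (hagr i.1 i.2 (lt_of_lt_of_le i.2 h)).symm⟩
      · exact hnv ⟨h, fun i => hagr i.1 (lt_of_lt_of_le i.2 h) i.2⟩
    set d := (wfK).min A hAne with hd
    obtain ⟨hdv, hdv', hdne⟩ : d ∈ A := (wfK).min_mem A hAne
    have hmin : ∀ j, j < d → j ∉ A := fun j hj hjA => (wfK).not_lt_min A hjA hj
    have hagr' : ∀ (j : K) (hj : j < d), v.2 ⟨j, lt_trans hj hdv⟩ = v'.2 ⟨j, lt_trans hj hdv'⟩ := by
      intro j hj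
      by_contra hne
      exact hmin j hj ⟨lt_trans hj hdv, lt_trans hj hdv', hne⟩
    have hwres : ndRes K v d hdv.le = ndRes K v' d hdv'.le := by
      refine (nd_eq_iff (q := ndRes K v d hdv.le) (p := ndRes K v' d hdv'.le) rfl).2
        fun j hj => ?_
      rw [va_ndRes hdv.le hj, va_ndRes hdv'.le hj, va_eq v (lt_trans hj hdv),
        va_eq v' (lt_trans hj hdv')]
      exact hagr' j hj
    set w := ndRes K v d hdv.le with hw
    have hchv : ndRes K v (nxt d) (nxt_le_of_lt hdv) = chd w (v.2 ⟨d, hdv⟩) :=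
      ndRes_nxt_eq_chd v d hdv
    have hchv' : ndRes K v' (nxt d) (nxt_le_of_lt hdv') = chd w (v'.2 ⟨d, hdv'⟩) := by
      rw [ndRes_nxt_eq_chd v' d hdv', ← hwres]
    have he1 : NdExt K (TF v) (TF (chd w (v.2 ⟨d, hdv⟩))) := by
      rw [← hchv]
      exact hmono' v (nxt d) (nxt_le_of_lt hdv)
    have he2 : NdExt K (TF v') (TF (chd w (v'.2 ⟨d, hdv'⟩))) := by
      rw [← hchv']
      exact hmono' v' (nxt d) (nxt_le_of_lt hdv')
    set γw := γf w with hγw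
    have hlt1 : γw < (TF (chd w (v.2 ⟨d, hdv⟩))).1 := (hq4 w (v.2 ⟨d, hdv⟩)).2.1
    have hlt2 : γw < (TF (chd w (v'.2 ⟨d, hdv'⟩))).1 := (hq4 w (v'.2 ⟨d, hdv'⟩)).2.1
    refine ⟨γw, lt_of_lt_of_le hlt1 he1.1, lt_of_lt_of_le hlt2 he2.1, ?_⟩
    rw [va_eq_of_ndExt he1 hlt1, va_eq_of_ndExt he2 hlt2]
    exact (hq4 w (v.2 ⟨d, hdv⟩)).2.2 (v'.2 ⟨d, hdv'⟩) hdne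
  have hcmp : ∀ v v' : Nd K K, NdExt K (TF v') (TF v) → (NdExt K v v' ∨ NdExt K v' v) := by
    intro v v' h
    by_contra hc
    push_neg at hc
    obtain ⟨j, hj1, hj2, hjne⟩ := hdiv v v' hc.1 hc.2
    exact hjne (va_eq_of_ndExt h hj1).symm
  -- Miller splitting property
  have hmiller : ∀ p ∈ S, ∃ q ∈ S, NdExt K q p ∧ #K ≤ #(splitVals K S q) := by
    rintro p ⟨u, hu⟩
    refine ⟨qf u, ⟨chd u (Classical.arbitrary K), (hq4 u _).1⟩,
      ndExt_trans hu (hq3 u), ?_⟩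
    have hmem : ∀ a : K, va (TF (chd u a)) (γf u) ∈ splitVals K S (qf u) := by
      intro a
      have h1 : NdExt K (TF (chd u a)) (qf u) := (hq4 u a).1
      have hlt : (qf u).1 < (TF (chd u a)).1 := by
        rw [hq1 u]
        exact (hq4 u a).2.1
      refine ⟨TF (chd u a), ⟨chd u a, ndExt_refl _⟩, hlt, fun i => h1.2 ⟨i.1, i.2⟩, ?_⟩
      have hv := va_eq (TF (chd u a)) hlt
      rw [← hv, hq1 u]
    have hinj : Function.Injective
        (fun a : K => (⟨va (TF (chd u a)) (γf u), hmem a⟩ : ↥(splitVals K S (qf u)))) := by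
      intro a a' h
      by_contra haa
      exact (hq4 u a).2.2 a' haa (congrArg Subtype.val h)
    exact Cardinal.mk_le_of_injective hinj
  -- Superclosed
  have hsuper : Superclosed K S := by
    intro p hplim hres
    set V : Set (Nd K K) := {v | NdExt K p (TF v)} with hVdef
    have hKn : (Set.univ : Set K).Nonempty := ⟨Classical.arbitrary K, trivial⟩
    set b0 : K := (wfK).min Set.univ hKn with hb0
    have hb0le : ∀ b : K, b0 ≤ b := fun b =>
      not_lt.1 ((wfK).not_lt_min Set.univ (Set.mem_univ b))
    set v0 : Nd K K := ⟨b0, fun _ => Classical.arbitrary K⟩ with hv0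
    have hv0V : v0 ∈ V := by
      have hnb : ¬ ∃ c, c < b0 := by
        rintro ⟨c, hc⟩
        exact absurd (hb0le c) (not_le.2 hc)
      show NdExt K p (F gf step v0.1 v0.2).2
      rw [F_base hnb v0.2]
      exact ndExt_iff_va.2 ⟨hb0le p.1, fun i hi => absurd hi (not_lt.2 (hb0le i))⟩
    have hVchain : ∀ v ∈ V, ∀ v' ∈ V, NdExt K v v' ∨ NdExt K v' v := by
      intro v hv v' hv'
      have hv1 : NdExt K p (TF v) := hv
      have hv2 : NdExt K p (TF v') := hv'
      rcases le_total (TF v').1 (TF v).1 with h | h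
      · exact (hcmp v' v (ndExt_of_ndExt_of_ndExt_of_le hv1 hv2 h)).symm
      · exact hcmp v v' (ndExt_of_ndExt_of_ndExt_of_le hv2 hv1 h)
    have hVdc : ∀ v ∈ V, ∀ (c : K) (hc : c ≤ v.1), ndRes K v c hc ∈ V :=
      fun v hv c hc => ndExt_trans (hmono' v c hc) hv
    set LV := {l : K | ∃ v ∈ V, v.1 = l} with hLV
    have hLVub : p.1 ∈ upperBounds LV := by
      rintro l ⟨v, hv, rfl⟩
      exact (hlenle v).trans hv.1
    have hLVbdd : BddAbove LV := ⟨p.1, hLVub⟩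
    set β := lub LV with hβ
    have hpick : ∀ i : K, i < β → ∃ v, v ∈ V ∧ i < v.1 := by
      intro i hi
      obtain ⟨l, ⟨v, hv, rfl⟩, hil⟩ := exists_lt_of_lt_lub hLVbdd hi
      exact ⟨v, hv, hil⟩
    choose pk hpk1 hpk2 using hpick
    set vstar : Nd K K := ⟨β, fun i => va (pk i.1 i.2) i.1⟩ with hvstar
    have hvext : ∀ v ∈ V, NdExt K vstar v := by
      intro v hv
      have hvβ : v.1 ≤ β := le_lub hLVbdd ⟨v, hv, rfl⟩
      refine ndExt_iff_va.2 ⟨hvβ, fun i hi => ?_⟩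
      have hiβ : i < β := lt_of_lt_of_le hi hvβ
      rw [va_eq vstar (show i < vstar.1 from hiβ)]
      show va (pk i hiβ) i = va v i
      rcases hVchain _ (hpk1 i hiβ) _ hv with h | h
      · exact va_eq_of_ndExt h hi
      · exact (va_eq_of_ndExt h (hpk2 i hiβ)).symm
    have hvres : ∀ (d : K) (hd : d < β), ndRes K vstar d hd.le ∈ V := by
      intro d hd
      have hdv : d < (pk d hd).1 := hpk2 d hd
      have heq : ndRes K vstar d hd.le = ndRes K (pk d hd) d hdv.le := by
        refine (nd_eq_iff (q := ndRes K vstar d hd.le)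
          (p := ndRes K (pk d hd) d hdv.le) rfl).2 fun j hj => ?_
        rw [va_ndRes (t := vstar) (c := d) hd.le hj, va_ndRes (t := pk d hd) (c := d) hdv.le hj]
        exact va_eq_of_ndExt (hvext _ (hpk1 d hd)) (lt_trans hj hdv)
      rw [heq]
      exact hVdc _ (hpk1 d hd) d hdv.le
    have hvstarV : vstar ∈ V := by
      by_cases hach : ∃ v ∈ V, v.1 = β
      · obtain ⟨v, hv, hvb⟩ := hach
        have heq : vstar = v := eq_of_ndExt_of_le (hvext v hv) (le_of_eq hvb.symm)
        rw [heq]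
        exact hv
      · have hexlt : ∃ c, c < β := by
          refine ⟨b0, lt_of_le_of_ne (hb0le β) ?_⟩
          intro h
          exact hach ⟨v0, hv0V, h⟩
        have hnm : ¬ ∃ c, c < β ∧ ∀ d, d < β → d ≤ c := by
          rintro ⟨c, hc, hcm⟩
          have hv := hpk1 c hc
          have hcv := hpk2 c hc
          rcases lt_or_eq_of_le (le_lub hLVbdd ⟨pk c hc, hv, rfl⟩) with h | h
          · exact absurd (hcm (pk c hc).1 h) (not_le.2 hcv)
          · exact hach ⟨pk c hc, hv, h⟩
        obtain ⟨z, hFeq, hz⟩ := F_limit (gf := gf) (step := step) hexlt hnm vstar.2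
        set Tset := {l | ∃ (c : K) (hc : c < β),
          (F gf step c (resf vstar.2 hc.le)).2.1 = l} with hTset
        have hTub : p.1 ∈ upperBounds Tset := by
          rintro l ⟨c, hc, rfl⟩
          exact (hvres c hc).1
        have hTbdd : BddAbove Tset := ⟨p.1, hTub⟩
        have hlen2 : (TF vstar).1 = lub Tset := by
          show (F gf step vstar.1 vstar.2).2.1 = _
          rw [hFeq]
        refine ndExt_iff_va.2 ⟨?_, fun i hi => ?_⟩
        · rw [show (TF vstar).1 = lub Tset from hlen2]
          exact lub_le hTbdd hTub
        · have hiT : i < lub Tset := by rw [← hlen2]; exact hi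
          obtain ⟨l, ⟨c, hc, rfl⟩, hil⟩ := exists_lt_of_lt_lub hTbdd hiT
          have h1 : NdExt K (TF vstar) (TF (ndRes K vstar c hc.le)) := hmono' vstar c hc.le
          rw [va_eq_of_ndExt h1 hil]
          exact va_eq_of_ndExt (hvres c hc) hil
    set μ := (TF vstar).1 with hμ
    have hmaxlen : ∀ v ∈ V, (TF v).1 ≤ μ := by
      intro v hv
      have h1 := hvext v hv
      have h2 : NdExt K (TF vstar) (TF v) := by
        have h3 := hmono' vstar v.1 h1.1
        rw [ndRes_eq_of_ndExt h1] at h3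
        exact h3
      exact h2.1
    have hμp : μ ≤ p.1 := hvstarV.1
    rcases lt_or_eq_of_le hμp with hμlt | hμeq
    · set γs := γf vstar with hγs
      set qs := qf vstar with hqs
      have hμγ : μ ≤ γs := hq2 vstar
      have hwit : ∀ c, μ < c → c < p.1 → ∃ u : Nd K K,
          β < u.1 ∧ (∀ i, i < c → va (TF u) i = va p i) ∧
          NdExt K (TF u) (TF (chd vstar (va u β))) := by
        intro c hμc hcp
        obtain ⟨u, hu⟩ := hres c hcp
        have h1 : NdExt K (ndRes K p c hcp.le) (TF vstar) :=
          ndExt_of_ndExt_of_ndExt_of_le (ndExt_ndRes p c hcp.le)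
            (show NdExt K p (TF vstar) from hvstarV) (le_of_lt hμc)
        have h2 : NdExt K (TF u) (TF vstar) := ndExt_trans h1 hu
        have h3 : NdExt K u vstar := by
          rcases hcmp vstar u h2 with h | h
          · exfalso
            have h4 : NdExt K (TF vstar) (TF u) := by
              have h5 := hmono' vstar u.1 h.1
              rw [ndRes_eq_of_ndExt h] at h5
              exact h5
            have h5 : c ≤ (TF u).1 := hu.1
            exact absurd (le_trans h5 h4.1) (not_le.2 hμc)
          · exact h
        have hβu : β < u.1 := by
          rcases lt_or_eq_of_le h3.1 with h | h
          · exact h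
          · exfalso
            have h6 : u = vstar := eq_of_ndExt_of_le h3 (le_of_eq h.symm)
            have h5 : c ≤ (TF u).1 := hu.1
            rw [h6] at h5
            exact absurd h5 (not_le.2 hμc)
        have hvals : ∀ i, i < c → va (TF u) i = va p i := by
          intro i hi
          rw [va_eq_of_ndExt hu (show i < (ndRes K p c hcp.le).1 from hi),
            va_ndRes hcp.le hi]
        have hchdu : NdExt K (TF u) (TF (chd vstar (va u β))) := by
          have h6 : ndRes K u (nxt β) (nxt_le_of_lt hβu) = chd vstar (va u β) := by
            have h7 := ndRes_nxt_eq_chd u β hβu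
            rw [h7]
            have h8 : ndRes K u β hβu.le = vstar := ndRes_eq_of_ndExt h3
            rw [h8, va_eq u hβu]
          rw [← h6]
          exact hmono' u (nxt β) (nxt_le_of_lt hβu)
        exact ⟨u, hβu, hvals, hchdu⟩
      choose uf huf1 huf2 huf3 using hwit
      have hqsp : ∀ i, i < γs → i < p.1 → va qs i = va p i := by
        intro i hiγ hip
        obtain ⟨c, hc1, hc2⟩ := hplim.2 (max i μ) (max_lt hip hμlt)
        have hμc : μ < c := lt_of_le_of_lt (le_max_right i μ) hc1
        have hic : i < c := lt_of_le_of_lt (le_max_left i μ) hc1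
        set a := va (uf c hμc hc2) β with ha
        have e1 : va qs i = va (TF (chd vstar a)) i := by
          have h := (hq4 vstar a).1
          exact (va_eq_of_ndExt h (show i < qs.1 by rw [show qs.1 = γs from hq1 vstar]; exact hiγ)).symm
        have e2 : va (TF (chd vstar a)) i = va (TF (uf c hμc hc2)) i := by
          have hilen : i < (TF (chd vstar a)).1 := lt_trans hiγ ((hq4 vstar a).2.1)
          exact (va_eq_of_ndExt (huf3 c hμc hc2) hilen).symm
        rw [e1, e2]
        exact huf2 c hμc hc2 i hic
      rcases le_or_gt p.1 γs with hpγ | hγp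
      · have hqsext : NdExt K qs p := ndExt_iff_va.2
          ⟨by rw [show qs.1 = γs from hq1 vstar]; exact hpγ,
            fun i hi => hqsp i (lt_of_lt_of_le hi hpγ) hi⟩
        exact ⟨chd vstar (Classical.arbitrary K),
          ndExt_trans hqsext ((hq4 vstar (Classical.arbitrary K)).1)⟩
      · obtain ⟨c0, hc01, hc02⟩ := hplim.2 γs hγp
        have hμc0 : μ < c0 := lt_of_le_of_lt hμγ hc01
        have hB : ∀ (c : K) (hγc : γs < c) (hcp : c < p.1),
            va (uf c (lt_of_le_of_lt hμγ hγc) hcp) β = va (uf c0 hμc0 hc02) β := by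
          intro c hγc hcp
          by_contra hne
          have hval : ∀ (d : K) (hμd : μ < d) (hγd : γs < d) (hdp : d < p.1),
              va (TF (chd vstar (va (uf d hμd hdp) β))) γs = va p γs := by
            intro d hμd hγd hdp
            have h5 := huf3 d hμd hdp
            have hγlen : γs < (TF (chd vstar (va (uf d hμd hdp) β))).1 :=
              (hq4 vstar _).2.1
            rw [← va_eq_of_ndExt h5 hγlen]
            exact huf2 d hμd hdp γs hγd
          have h1 := (hq4 vstar (va (uf c (lt_of_le_of_lt hμγ hγc) hcp) β)).2.2
            (va (uf c0 hμc0 hc02) β) hne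
          exact h1 (by rw [hval c _ hγc hcp, hval c0 hμc0 hc01 hc02])
        set a0 := va (uf c0 hμc0 hc02) β with ha0
        set tstar := TF (chd vstar a0) with htstar
        have hC : ∀ i, i < tstar.1 → i < p.1 → va tstar i = va p i := by
          intro i hit hip
          obtain ⟨c, hc1, hc2⟩ := hplim.2 (max i γs) (max_lt hip hγp)
          have hic : i < c := lt_of_le_of_lt (le_max_left _ _) hc1
          have hγc : γs < c := lt_of_le_of_lt (le_max_right _ _) hc1
          have hac := hB c hγc hc2
          have h5 := huf3 c (lt_of_le_of_lt hμγ hγc) hc2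
          rw [hac] at h5
          rw [← va_eq_of_ndExt h5 hit]
          exact huf2 c (lt_of_le_of_lt hμγ hγc) hc2 i hic
        rcases le_or_gt p.1 tstar.1 with h | h
        · exact ⟨chd vstar a0, ndExt_iff_va.2
            ⟨h, fun i hi => hC i (lt_of_lt_of_le hi h) hi⟩⟩
        · exfalso
          have hmem : chd vstar a0 ∈ V := ndExt_iff_va.2
            ⟨h.le, fun i hi => (hC i hi (lt_trans hi h)).symm⟩
          have h7 := hmaxlen _ hmem
          exact absurd ((hq4 vstar a0).2.1.trans_le h7) (not_lt.2 hμγ)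
    · have heq : p = TF vstar :=
        eq_of_ndExt_of_le (show NdExt K p (TF vstar) from hvstarV) (le_of_eq hμeq.symm)
      exact ⟨vstar, by rw [← heq]; exact ndExt_refl p⟩
  exact ⟨S, hST, hSne, hsub, hsuper, hmiller⟩
end

end MillerAux
/-- If `K` is weakly compact and the body of a pruned tree `T` contains a
closed copy of the generalized Baire space, then `T` has a κ-Miller subtree. -/
theorem millerSubtree_of_closed_baire_copy (K : Type u) [LinearOrder K]
    [WellFoundedLT K] (hseg : ∀ b : K, #(Set.Iio b) < #K)
    (hwc : WComp K)
    (T : Set (Nd K K)) (hT : IsSubtree K T) (hpr : Pruned K T)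
    (C : Set (K → K)) (hCT : C ⊆ body K T)
    (hCcl : IsClosed[bTop K K] C) (hCh : HomeoToBaire K C) :
    ∃ S, S ⊆ T ∧ MillerTree K S := by
  classical
  obtain ⟨hin, htp⟩ := hwc
  haveI hne : Nonempty K := by
    by_contra h
    rw [not_nonempty_iff] at h
    have h1 := hin.1
    rw [Cardinal.mk_eq_zero K] at h1
    exact absurd (Cardinal.aleph0_pos.trans h1) (lt_irrefl _)
  haveI hnm : NoMaxOrder K := by
    refine ⟨fun a => ?_⟩
    by_contra h
    push_neg at h
    have hinj : Function.Injective
        (fun x : K => if hx : x < a then some (⟨x, hx⟩ : Set.Iio a) else none) := by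
      intro x y hxy
      by_cases hx : x < a <;> by_cases hy : y < a <;> simp [hx, hy] at hxy
      · exact congrArg Subtype.val hxy
      · rw [le_antisymm (h x) (not_lt.1 hx), le_antisymm (h y) (not_lt.1 hy)]
    have h1 : #K ≤ #(Option (Set.Iio a)) := Cardinal.mk_le_of_injective hinj
    rw [Cardinal.mk_option] at h1
    have h2 : #(Set.Iio a) + 1 < #K :=
      Cardinal.add_lt_of_lt hin.1.le (hseg a) (Cardinal.one_lt_aleph0.trans hin.1)
    exact absurd (h1.trans_lt h2) (lt_irrefl _)
  letI : TopologicalSpace (K → K) := bTop K K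
  obtain ⟨e⟩ := hCh
  set gf : (K → K) → (K → K) := fun z => (e.symm z : K → K) with hgf
  have hgC : ∀ z, gf z ∈ C := fun z => (e.symm z).2
  have hgcont : Continuous gf := continuous_subtype_val.comp e.symm.continuous
  have hginj : Function.Injective gf := fun z z' h => e.symm.injective (Subtype.ext h)
  -- continuity in the tree form
  have hgbasic : ∀ z : K → K, ∀ t : Nd K K, gf z ∈ MillerAux.cyl t →
      ∃ l, ∀ y ∈ MillerAux.cyl (xRes K z l), gf y ∈ MillerAux.cyl t := by
    intro z t hzt
    have hop : IsOpen (gf ⁻¹' MillerAux.cyl t) := (MillerAux.isOpen_cyl t).preimage hgcont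
    obtain ⟨l, hl⟩ := MillerAux.basic_nbhd hop hzt
    exact ⟨l, fun y hy => hl hy⟩
  -- images of coordinate sets are relatively open
  have hgopen : ∀ b a : K, ∃ W, IsOpen[bTop K K] W ∧ ∀ z : K → K, (gf z ∈ W ↔ z b = a) := by
    intro b a
    have hop : IsOpen (⇑e ⁻¹' {x : K → K | x b = a}) :=
      (MillerAux.isOpen_coord b a).preimage e.continuous
    obtain ⟨W, hWop, hWpre⟩ := isOpen_induced_iff.1 hop
    refine ⟨W, hWop, fun z => ?_⟩
    constructor
    · intro hz
      have h1 : e.symm z ∈ Subtype.val ⁻¹' W := hz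
      rw [hWpre] at h1
      simpa using h1
    · intro hz
      have h1 : e.symm z ∈ ⇑e ⁻¹' {x : K → K | x b = a} := by simpa using hz
      rw [← hWpre] at h1
      exact h1
  -- images of cylinders are closed
  have hgclosed : ∀ t : Nd K K, ∀ x : K → K,
      (∀ b, ∃ z ∈ MillerAux.cyl t, ∀ i, i < b → gf z i = x i) →
      ∃ z ∈ MillerAux.cyl t, gf z = x := by
    intro t x hx
    have him : gf '' MillerAux.cyl t = Subtype.val '' (⇑e ⁻¹' MillerAux.cyl t) := by
      ext w
      constructor
      · rintro ⟨z, hz, rfl⟩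
        exact ⟨e.symm z, by simpa using hz, rfl⟩
      · rintro ⟨v, hv, rfl⟩
        exact ⟨e v, hv, by rw [hgf]; simp⟩
    have hDcl : IsClosed (gf '' MillerAux.cyl t) := by
      rw [him]
      exact hCcl.isClosedMap_subtype_val _
        ((MillerAux.isClosed_cyl t).preimage e.continuous)
    have hxm : x ∈ gf '' MillerAux.cyl t := by
      refine MillerAux.mem_of_closed_tree hDcl fun b => ?_
      obtain ⟨z, hz, hzi⟩ := hx b
      exact ⟨gf z, ⟨z, hz, rfl⟩, hzi⟩
    obtain ⟨z, hz, hzx⟩ := hxm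
    exact ⟨z, hz, hzx⟩
  have hgT : ∀ (z : K → K) (b : K), xRes K (gf z) b ∈ T := fun z b => hCT (hgC z) b
  exact MillerAux.main_construction hseg hin htp gf hginj hgbasic hgopen hgclosed T hgT
end

section
/- Let κ be an uncountable cardinal with κ = κ^{<κ} and T a subtree of κ^{<κ} × κ^{<κ}. If there is an ∃^x-perfect embedding into T, then the projection p[T] contains a closed-in-κ^κ subset homeomorphic to κ^2. -/
open Cardinal Set Topology

universe u

/-!
Along a branch `z : K → 2` the images `e (z ↾ α)` increase, with length at least `α`, so their
union is a branch `(X z, Y z)` of `T`; thus `X z ∈ p[T]`. Since `e` sends incompatible nodes to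
nodes with incompatible first coordinates, agreement of `X z` and `X z'` below the length of
`e (z ↾ α)` forces `z ↾ α = z' ↾ α`; this gives injectivity and continuity of the inverse.

For closedness, fix `x` outside the range. The nodes `u` for which the first coordinate of `e u`
is an initial segment of `x` are pairwise compatible, so they all lie along one branch `w`, and
some `w ↾ δ` is not among them. Every branch `z` passes either through `w ↾ δ` or through one of
the nodes `(w ↾ i)⌢⟨a⟩` with `i < δ` and `a ≠ w i`, none of which is among them. These are fewer
than `κ` nodes, so by regularity of `κ` (a consequence of `κ^{<κ} = κ` by König's theorem) the
lengths of their images are bounded by some `β`, and the neighbourhood of `x` fixed below `β`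
misses the range.
-/

section Cardinality

variable {K : Type u} [LinearOrder K]

theorem Cardinal.isRegular_of_powerlt_self {c : Cardinal} (hc : ℵ₀ ≤ c) (h : c ^< c = c) :
    c.IsRegular :=
  ⟨hc, le_of_not_gt fun hcof => ((lt_power_cof_ord hc).trans_le (le_powerlt c hcof)).ne' h⟩

theorem card_Iic_lt_of_card_Iio_lt (hK : ℵ₀ ≤ #K) (hseg : ∀ b : K, #(Iio b) < #K) (b : K) :
    #(Iic b) < #K := by
  rw [← Iio_insert]
  exact mk_insert_le.trans_lt (add_lt_of_lt hK (hseg b) (one_lt_aleph0.trans_le hK))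

theorem noMaxOrder_of_card_Iio_lt (hK : ℵ₀ ≤ #K) (hseg : ∀ b : K, #(Iio b) < #K) :
    NoMaxOrder K := by
  refine ⟨fun b => ?_⟩
  by_contra! h
  have hb : Iic b = Set.univ := eq_univ_of_forall h
  exact (card_Iic_lt_of_card_Iio_lt hK hseg b).ne (by rw [hb, mk_univ])

theorem exists_forall_le_of_card_lt (hreg : (#K).IsRegular) (hseg : ∀ b : K, #(Iio b) < #K)
    {ι : Type u} (f : ι → K) (hι : #ι < #K) : ∃ β, ∀ i, f i ≤ β := by
  by_contra! h
  have hcover : ⋃ i, Iic (f i) = Set.univ :=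
    eq_univ_of_forall fun β => mem_iUnion.2 ((h β).imp fun _ hi => hi.le)
  have hsmall := (card_iUnion_lt_iff_forall_of_isRegular hreg hι).2
    fun i => card_Iic_lt_of_card_Iio_lt hreg.aleph0_le hseg (f i)
  rw [hcover, mk_univ] at hsmall
  exact hsmall.false

end Cardinality

section Nodes

variable {K : Type u} [LinearOrder K] {Y : Type u}

def NdAgree (p q : Nd K Y) : Prop :=
  ∀ i (hp : i < p.1) (hq : i < q.1), p.2 ⟨i, hp⟩ = q.2 ⟨i, hq⟩

def IsSegOf (p : Nd K Y) (x : K → Y) : Prop :=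
  ∀ i : Iio p.1, p.2 i = x i

theorem NdAgree.symm {p q : Nd K Y} (h : NdAgree p q) : NdAgree q p :=
  fun i hq hp => (h i hp hq).symm

theorem NdExt.ndAgree {p q : Nd K Y} (h : NdExt K q p) : NdAgree q p :=
  fun i _ hp => h.2 ⟨i, hp⟩

theorem NdAgree.ndExt_or_ndExt {p q : Nd K Y} (h : NdAgree p q) : NdExt K p q ∨ NdExt K q p := by
  rcases le_total p.1 q.1 with hle | hle
  · exact Or.inr ⟨hle, fun i => (h i.1 i.2 _).symm⟩
  · exact Or.inl ⟨hle, fun i => h i.1 _ i.2⟩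

theorem IsSegOf.ndAgree {p q : Nd K Y} {x y : K → Y} (hp : IsSegOf p x) (hq : IsSegOf q y)
    (hxy : ∀ i < p.1, x i = y i) : NdAgree p q :=
  fun i hip hiq => (hp ⟨i, hip⟩).trans ((hxy i hip).trans (hq ⟨i, hiq⟩).symm)

theorem xRes_congr {x y : K → Y} {b : K} (h : ∀ i < b, x i = y i) : xRes K x b = xRes K y b := by
  unfold xRes
  congr 1
  exact funext fun i => h i.1 i.2

theorem exists_isSegOf_of_pairwise_ndAgree [Nonempty Y] (S : Set (Nd K Y))
    (hS : ∀ p ∈ S, ∀ q ∈ S, NdAgree p q) : ∃ w : K → Y, ∀ p ∈ S, IsSegOf p w := by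
  classical
  refine ⟨fun i => if h : ∃ p ∈ S, i < p.1 then h.choose.2 ⟨i, h.choose_spec.2⟩
    else Classical.arbitrary Y, fun p hp i => ?_⟩
  have h : ∃ p ∈ S, i.1 < p.1 := ⟨p, hp, i.2⟩
  simp only [dif_pos h]
  exact hS p hp _ h.choose_spec.1 i.1 i.2 _

theorem eqOn_or_exists_first_ne [WellFoundedLT K] (z w : K → Y) (δ : K) :
    (∀ i < δ, z i = w i) ∨ ∃ i < δ, (∀ j < i, z j = w j) ∧ z i ≠ w i := by
  by_cases h : ∃ i, i < δ ∧ z i ≠ w i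
  · obtain ⟨i, ⟨hiδ, hne⟩, hmin⟩ := wellFounded_lt.has_min _ h
    refine Or.inr ⟨i, hiδ, fun j hji => ?_, hne⟩
    by_contra hj
    exact hmin j ⟨hji.trans hiδ, hj⟩ hji
  · push Not at h
    exact Or.inl h

def chainLim [SuccOrder K] (f : K → Nd K Y) (hf : ∀ i, i < (f (Order.succ i)).1) (i : K) : Y :=
  (f (Order.succ i)).2 ⟨i, hf i⟩

theorem isSegOf_chainLim [SuccOrder K] {f : K → Nd K Y} (hf : ∀ i, i < (f (Order.succ i)).1)
    (hagree : ∀ c d, NdAgree (f c) (f d)) (b : K) : IsSegOf (f b) (chainLim f hf) :=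
  fun i => hagree _ _ i.1 i.2 (hf i.1)

end Nodes

section Cylinders

variable {K : Type u} [LinearOrder K] {Y : Type u}

theorem isOpen_bTop_cylinder (b : K) (s : K → Y) :
    IsOpen[bTop K Y] {x | ∀ i, i < b → x i = s i} :=
  TopologicalSpace.isOpen_generateFrom_of_mem ⟨b, s, rfl⟩

theorem continuous_bTop_of {X : Type*} [TopologicalSpace X] {g : X → K → Y}
    (h : ∀ x (d : K), ∃ U, IsOpen U ∧ x ∈ U ∧ ∀ x' ∈ U, ∀ i < d, g x' i = g x i) :
    Continuous[_, bTop K Y] g := by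
  refine continuous_generateFrom_iff.2 ?_
  rintro _ ⟨d, s, rfl⟩
  refine isOpen_iff_forall_mem_open.2 fun x hx => ?_
  obtain ⟨U, hU, hxU, hg⟩ := h x d
  exact ⟨U, fun x' hx' i hi => (hg x' hx' i hi).trans (hx i hi), hU, hxU⟩

end Cylinders

def PNd.fstNd {K : Type u} [LinearOrder K] (p : PNd K) : Nd K K := ⟨p.1, p.2.1⟩

def PNd.sndNd {K : Type u} [LinearOrder K] (p : PNd K) : Nd K K := ⟨p.1, p.2.2⟩

namespace PerfEmb

variable {K : Type u} [LinearOrder K] {T : Set (PNd K)} {e : Nd K (ULift.{u} Bool) → PNd K}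

theorem ndExt_of_lt (he : PerfEmb K T e) (z : K → ULift.{u} Bool) {c d : K} (h : c < d) :
    (e (xRes K z c)).1 < (e (xRes K z d)).1 ∧
      NdExt K (e (xRes K z d)).fstNd (e (xRes K z c)).fstNd ∧
      NdExt K (e (xRes K z d)).sndNd (e (xRes K z c)).sndNd := by
  obtain ⟨hlt, hfst, hsnd⟩ := he.2.1 (xRes K z c) (xRes K z d) h fun _ => rfl
  exact ⟨hlt, ⟨hlt.le, hfst⟩, ⟨hlt.le, hsnd⟩⟩

theorem ndAgree_xRes (he : PerfEmb K T e) (z : K → ULift.{u} Bool) (c d : K) :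
    NdAgree (e (xRes K z c)).fstNd (e (xRes K z d)).fstNd ∧
      NdAgree (e (xRes K z c)).sndNd (e (xRes K z d)).sndNd := by
  rcases lt_trichotomy c d with h | rfl | h
  · obtain ⟨-, hfst, hsnd⟩ := he.ndExt_of_lt z h
    exact ⟨hfst.ndAgree.symm, hsnd.ndAgree.symm⟩
  · exact ⟨fun _ _ _ => rfl, fun _ _ _ => rfl⟩
  · obtain ⟨-, hfst, hsnd⟩ := he.ndExt_of_lt z h
    exact ⟨hfst.ndAgree, hsnd.ndAgree⟩

theorem le_len [WellFoundedLT K] (he : PerfEmb K T e) (z : K → ULift.{u} Bool) (b : K) :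
    b ≤ (e (xRes K z b)).1 := by
  induction b using WellFoundedLT.induction with
  | _ b ih =>
    by_contra! h
    exact (ih _ h).not_gt (he.ndExt_of_lt z h).1

theorem ndAgree_of_ndAgree_fstNd (he : PerfEmb K T e) {u u' : Nd K (ULift.{u} Bool)}
    (h : NdAgree (e u).fstNd (e u').fstNd) : NdAgree u u' := by
  by_contra hne
  obtain ⟨hn, hn'⟩ := he.2.2.1 u u' (fun h' => hne h'.ndAgree) (fun h' => hne h'.ndAgree.symm)
  exact h.ndExt_or_ndExt.elim hn hn'

theorem exists_isSegOf_of_isSegOf_fstNd (he : PerfEmb K T e) (x : K → K) :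
    ∃ w : K → ULift.{u} Bool, ∀ u, IsSegOf (e u).fstNd x → IsSegOf u w :=
  exists_isSegOf_of_pairwise_ndAgree {u | IsSegOf (e u).fstNd x} fun _ hp _ hq =>
    he.ndAgree_of_ndAgree_fstNd (hp.ndAgree hq fun _ _ => rfl)

variable [WellFoundedLT K] [SuccOrder K] [NoMaxOrder K]

theorem lt_len_succ (he : PerfEmb K T e) (z : K → ULift.{u} Bool) (i : K) :
    i < (e (xRes K z (Order.succ i))).1 :=
  (Order.lt_succ i).trans_le (he.le_len z _)

noncomputable def branchFst (he : PerfEmb K T e) (z : K → ULift.{u} Bool) : K → K :=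
  chainLim (fun b => (e (xRes K z b)).fstNd) (he.lt_len_succ z)

noncomputable def branchSnd (he : PerfEmb K T e) (z : K → ULift.{u} Bool) : K → K :=
  chainLim (fun b => (e (xRes K z b)).sndNd) (he.lt_len_succ z)

theorem isSegOf_branchFst (he : PerfEmb K T e) (z : K → ULift.{u} Bool) (b : K) :
    IsSegOf (e (xRes K z b)).fstNd (he.branchFst z) :=
  isSegOf_chainLim _ (fun c d => (he.ndAgree_xRes z c d).1) b

theorem isSegOf_branchSnd (he : PerfEmb K T e) (z : K → ULift.{u} Bool) (b : K) :
    IsSegOf (e (xRes K z b)).sndNd (he.branchSnd z) :=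
  isSegOf_chainLim _ (fun c d => (he.ndAgree_xRes z c d).2) b

theorem branchFst_mem_pProj (he : PerfEmb K T e) (hT : IsPSubtree K T) (z : K → ULift.{u} Bool) :
    he.branchFst z ∈ pProj K T := by
  refine ⟨he.branchSnd z, fun b => ?_⟩
  have hmem := hT _ (he.1 (xRes K z b)) b (he.le_len z b)
  have hfst := he.isSegOf_branchFst z b
  have hsnd := he.isSegOf_branchSnd z b
  convert hmem using 3
  · exact funext fun i => (hfst ⟨i.1, _⟩).symm
  · exact funext fun i => (hsnd ⟨i.1, _⟩).symm

theorem eqOn_of_branchFst_eqOn (he : PerfEmb K T e) {z z' : K → ULift.{u} Bool} {d : K}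
    (h : ∀ j < (e (xRes K z d)).1, he.branchFst z j = he.branchFst z' j) :
    ∀ i < d, z i = z' i := fun i hi =>
  he.ndAgree_of_ndAgree_fstNd ((he.isSegOf_branchFst z d).ndAgree (he.isSegOf_branchFst z' d) h)
    i hi hi

theorem branchFst_injective (he : PerfEmb K T e) : Function.Injective he.branchFst :=
  fun z z' h => funext fun i =>
    he.eqOn_of_branchFst_eqOn (d := Order.succ i) (fun j _ => by rw [h]) i (Order.lt_succ i)

theorem branchFst_eqOn (he : PerfEmb K T e) {z z' : K → ULift.{u} Bool} {d : K}
    (h : ∀ j < d, z j = z' j) : ∀ i < d, he.branchFst z i = he.branchFst z' i := by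
  intro i hi
  have hres : xRes K z (Order.succ i) = xRes K z' (Order.succ i) :=
    xRes_congr fun j hj => h j ((Order.lt_succ_iff.1 hj).trans_lt hi)
  have hz := he.isSegOf_branchFst z (Order.succ i)
  rw [hres] at hz
  exact (hz ⟨i, he.lt_len_succ z' i⟩).symm.trans
    (he.isSegOf_branchFst z' _ ⟨i, he.lt_len_succ z' i⟩)

theorem exists_not_isSegOf_fstNd (he : PerfEmb K T e) {x : K → K} (hx : x ∉ range he.branchFst)
    (w : K → ULift.{u} Bool) : ∃ δ, ¬ IsSegOf (e (xRes K w δ)).fstNd x := by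
  by_contra! h
  refine hx ⟨w, funext fun i => ?_⟩
  exact (he.isSegOf_branchFst w _ ⟨i, he.lt_len_succ w i⟩).symm.trans
    (h _ ⟨i, he.lt_len_succ w i⟩)

theorem exists_bound_of_notMem_range (he : PerfEmb K T e) (hreg : (#K).IsRegular)
    (hseg : ∀ b : K, #(Iio b) < #K) {x : K → K} (hx : x ∉ range he.branchFst) :
    ∃ β, ∀ z, ∃ c, (e (xRes K z c)).1 ≤ β ∧ ¬ IsSegOf (e (xRes K z c)).fstNd x := by
  obtain ⟨w, hw⟩ := he.exists_isSegOf_of_isSegOf_fstNd x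
  obtain ⟨δ, hδ⟩ := he.exists_not_isSegOf_fstNd hx w
  have hcard : #(Iio δ × ULift.{u} Bool) < #K := by
    rw [mk_prod, lift_id, lift_id]
    exact mul_lt_of_lt hreg.aleph0_le (hseg δ)
      ((lt_aleph0_of_finite _).trans_le hreg.aleph0_le)
  obtain ⟨β, hβ⟩ := exists_forall_le_of_card_lt hreg hseg
    (fun p : Iio δ × ULift.{u} Bool =>
      (e (xRes K (Function.update w p.1 p.2) (Order.succ p.1.1))).1) hcard
  refine ⟨max β (e (xRes K w δ)).1, fun z => ?_⟩
  rcases eqOn_or_exists_first_ne z w δ with hzw | ⟨i, hiδ, hzw, hne⟩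
  · rw [← xRes_congr hzw] at hδ
    exact ⟨δ, by rw [xRes_congr hzw]; exact le_max_right _ _, hδ⟩
  · have hres : xRes K z (Order.succ i) = xRes K (Function.update w i (z i)) (Order.succ i) := by
      refine xRes_congr fun j hj => ?_
      rcases (Order.lt_succ_iff.1 hj).lt_or_eq with hji | rfl
      · rw [Function.update_of_ne hji.ne, hzw j hji]
      · rw [Function.update_self]
    refine ⟨Order.succ i, ?_, fun hsegx => hne (hw _ hsegx ⟨i, Order.lt_succ i⟩)⟩
    rw [hres]
    exact (hβ (⟨i, hiδ⟩, z i)).trans (le_max_left _ _)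

theorem isClosed_range_branchFst (he : PerfEmb K T e) (hreg : (#K).IsRegular)
    (hseg : ∀ b : K, #(Iio b) < #K) : IsClosed[bTop K K] (range he.branchFst) := by
  let := bTop K K
  refine isOpen_compl_iff.1 (isOpen_iff_forall_mem_open.2 fun x hx => ?_)
  obtain ⟨β, hβ⟩ := he.exists_bound_of_notMem_range hreg hseg hx
  refine ⟨_, ?_, isOpen_bTop_cylinder β x, fun _ _ => rfl⟩
  rintro _ hx' ⟨z, rfl⟩
  obtain ⟨c, hcβ, hc⟩ := hβ z
  exact hc fun i => (he.isSegOf_branchFst z c i).trans (hx' i (i.2.trans_le hcβ))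

theorem homeoToCantor_range_branchFst (he : PerfEmb K T e) :
    HomeoToCantor K (range he.branchFst) := by
  let := bTop K K
  let : TopologicalSpace (K → ULift.{u} Bool) := bTop K (ULift.{u} Bool)
  let E := Equiv.ofInjective he.branchFst he.branchFst_injective
  refine ⟨Homeomorph.symm ⟨E, ?_, ?_⟩⟩
  · refine Continuous.subtype_mk (continuous_bTop_of fun z d => ?_) _
    exact ⟨_, isOpen_bTop_cylinder d z, fun _ _ => rfl, fun z' hz' => he.branchFst_eqOn hz'⟩
  · refine continuous_bTop_of fun p d => ⟨_, (isOpen_bTop_cylinder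
      (e (xRes K (E.symm p) d)).1 p.1).preimage continuous_subtype_val, fun _ _ => rfl,
      fun q hq i hi => (he.eqOn_of_branchFst_eqOn (fun j hj => ?_) i hi).symm⟩
    have hp := Equiv.apply_ofInjective_symm he.branchFst_injective p
    have hq' := Equiv.apply_ofInjective_symm he.branchFst_injective q
    exact (congrFun hp j).trans ((hq j hj).symm.trans (congrFun hq' j).symm)

end PerfEmb

/-- If there is an `∃^x`-perfect embedding into a product tree `T`, then
`p[T]` contains a closed copy of the Cantor space `K → 2`. -/
theorem perfEmb_closed_cantor_copy (K : Type u) [LinearOrder K] [WellFoundedLT K]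
    (hseg : ∀ b : K, #(Set.Iio b) < #K)
    (hunc : ℵ₀ < #K) (hpow : Cardinal.powerlt #K #K = #K)
    (T : Set (PNd K)) (hT : IsPSubtree K T)
    (e : Nd K (ULift.{u} Bool) → PNd K) (he : PerfEmb K T e) :
    ∃ C ⊆ pProj K T, IsClosed[bTop K K] C ∧ HomeoToCantor K C := by
  let : SuccOrder K := SuccOrder.ofLinearWellFoundedLT K
  have : NoMaxOrder K := noMaxOrder_of_card_Iio_lt hunc.le hseg
  have hreg := Cardinal.isRegular_of_powerlt_self hunc.le hpow
  refine ⟨range he.branchFst, ?_, he.isClosed_range_branchFst hreg hseg,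
    he.homeoToCantor_range_branchFst⟩
  rintro _ ⟨z, rfl⟩
  exact he.branchFst_mem_pProj hT z
end

section
/- Let κ be an uncountable cardinal with κ = κ^{<κ} and T a subtree of κ^{<κ} × κ^{<κ}. If there is an ∃^x-superperfect embedding into T, then there is a κ-Miller tree S with [S] ⊆ p[T], and hence p[T] is not contained in any K_κ subset of κ^κ. -/
open Cardinal Set Topology

universe u

/-! The tree `S` of initial segments of the first coordinates `t₀ˢ` is κ-splitting at the
levels `γ_s`. The heart of the matter is a tracing argument: if `x ↾ c ∈ S` for all `c` in a
lower set `L` without maximum, a branch `z` of `κ^{<κ}` whose image follows `x` along `L` is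
built by recursion. At each node at most one immediate successor has an image agreeing with `x`
at `γ_s`, and continuity of the embedding carries agreement through limits. For `L = κ` this
gives `[S] ⊆ p[T]`, the second coordinates along `z` witnessing the projection; for `L` a limit
length it gives superclosedness. Finally, a κ-compact set takes fewer than κ values at any
position, so a `z` that at each step avoids the values of the `b`-th compact set at `γ_{z↾b}`
yields an element of `p[T]` outside a given `K_κ` set. -/

open Order

section Trees

variable {K : Type u} [LinearOrder K] {Y : Type u}

theorem nd_ext {p q : Nd K Y} (h : p.1 = q.1)
    (hv : ∀ i (hp : i < p.1) (hq : i < q.1), p.2 ⟨i, hp⟩ = q.2 ⟨i, hq⟩) : p = q := by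
  obtain ⟨b, f⟩ := p
  obtain ⟨b', g⟩ := q
  obtain rfl : b = b' := h
  exact congrArg (Sigma.mk b) (funext fun i => hv i.1 i.2 i.2)

theorem NdExt.intro {q p : Nd K Y} (hl : p.1 ≤ q.1)
    (hv : ∀ i (hp : i < p.1) (hq : i < q.1), q.2 ⟨i, hq⟩ = p.2 ⟨i, hp⟩) : NdExt K q p :=
  ⟨hl, fun i => hv i.1 i.2 _⟩

theorem NdExt.val {q p : Nd K Y} (h : NdExt K q p) (i : K) (hp : i < p.1) (hq : i < q.1) :
    q.2 ⟨i, hq⟩ = p.2 ⟨i, hp⟩ :=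
  h.2 ⟨i, hp⟩

theorem NdExt.refl (p : Nd K Y) : NdExt K p p :=
  .intro le_rfl fun _ _ _ => rfl

theorem NdExt.trans {r q p : Nd K Y} (h₁ : NdExt K r q) (h₂ : NdExt K q p) : NdExt K r p :=
  .intro (h₂.1.trans h₁.1) fun i hp hr =>
    (h₁.val i (hp.trans_le h₂.1) hr).trans (h₂.val i hp _)

theorem NdExt.eq_of_fst_eq {q p : Nd K Y} (h : NdExt K q p) (hl : q.1 = p.1) : q = p :=
  nd_ext hl fun i hq hp => h.val i hp hq

theorem ndExt_ndRes (p : Nd K Y) (c : K) (h : c ≤ p.1) : NdExt K p (ndRes K p c h) :=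
  .intro h fun _ _ _ => rfl

def NdComparable (p q : Nd K Y) : Prop := NdExt K p q ∨ NdExt K q p

theorem NdComparable.val_eq {p q : Nd K Y} (h : NdComparable p q) (i : K) (hp : i < p.1)
    (hq : i < q.1) : p.2 ⟨i, hp⟩ = q.2 ⟨i, hq⟩ :=
  h.elim (fun h => h.val i hq hp) fun h => (h.val i hp hq).symm

theorem ndComparable_xRes (x : K → Y) (b b' : K) : NdComparable (xRes K x b) (xRes K x b') :=
  (le_total b b').elim (fun h => .inr (.intro h fun _ _ _ => rfl))
    fun h => .inl (.intro h fun _ _ _ => rfl)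

def AgreeOn (L : Set K) (p : Nd K Y) (x : K → Y) : Prop :=
  ∀ i (h : i < p.1), i ∈ L → p.2 ⟨i, h⟩ = x i

theorem exists_eq_apply_xRes [WellFoundedLT K] (f : Nd K Y → Y) :
    ∃ z : K → Y, ∀ b, z b = f (xRes K z b) :=
  ⟨wellFounded_lt.fix fun b ih => f ⟨b, fun i => ih i.1 i.2⟩,
    fun b => wellFounded_lt.fix_eq _ b⟩

theorem exists_agreeOn_of_monotone [SuccOrder K] [NoMaxOrder K] {Y' : Type u}
    (g : Nd K Y → Nd K Y') (hg : ∀ {u u'}, NdExt K u' u → NdExt K (g u') (g u))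
    (hlen : ∀ u, u.1 ≤ (g u).1) (z : K → Y) :
    ∃ x : K → Y', ∀ b, AgreeOn univ (g (xRes K z b)) x :=
  ⟨fun i => (g (xRes K z (succ i))).2 ⟨i, (lt_succ i).trans_le (hlen (xRes K z (succ i)))⟩,
    fun b i hi _ => NdComparable.val_eq (Or.imp hg hg (ndComparable_xRes z b (succ i))) i hi _⟩

end Trees

section Successors

variable {K : Type u} [LinearOrder K] [SuccOrder K]

theorem ndExt_extNd (u : Nd K K) (a : K) : NdExt K (extNd K u a) u :=
  .intro (le_succ u.1) fun _ hi _ => dif_pos hi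

theorem NdExt.extNd {u w : Nd K K} (h : NdExt K u w) (hw : w.1 < u.1) :
    NdExt K u (extNd K w (u.2 ⟨w.1, hw⟩)) := by
  refine .intro (succ_le_of_lt hw) fun i hi hu => ?_
  show _ = dite _ _ _
  split_ifs with hiw
  · exact h.val i hiw hu
  · obtain rfl : i = w.1 := le_antisymm (le_of_lt_succ hi) (not_lt.mp hiw)
    rfl

theorem xRes_succ (z : K → K) (b : K) : xRes K z (succ b) = extNd K (xRes K z b) (z b) := by
  refine nd_ext rfl fun i hi _ => ?_
  show _ = dite _ _ _
  split_ifs with hib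
  · rfl
  · obtain rfl : i = b := le_antisymm (le_of_lt_succ hi) (not_lt.mp hib)
    rfl

theorem exists_extNd_of_not_ndComparable [WellFoundedLT K] {u u' : Nd K K}
    (h : ¬NdComparable u u') :
    ∃ w a a', a ≠ a' ∧ NdExt K u (extNd K w a) ∧ NdExt K u' (extNd K w a') := by
  set D := {d | ∃ (h : d < u.1) (h' : d < u'.1), u.2 ⟨d, h⟩ ≠ u'.2 ⟨d, h'⟩}
  have hD : D.Nonempty := by
    by_contra hD
    have hagree : ∀ i (hi : i < u.1) (hi' : i < u'.1), u.2 ⟨i, hi⟩ = u'.2 ⟨i, hi'⟩ :=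
      fun i hi hi' => by_contra fun hne => hD ⟨i, hi, hi', hne⟩
    exact h ((le_total u.1 u'.1).elim
      (fun hl => .inr (.intro hl fun i hi hi' => (hagree i hi hi').symm))
      fun hl => .inl (.intro hl fun i hi' hi => hagree i hi hi'))
  obtain ⟨d, ⟨hd, hd', hne⟩, hmin⟩ := wellFounded_lt.has_min D hD
  have hres : ndRes K u' d hd'.le = ndRes K u d hd.le := nd_ext rfl fun i hi _ =>
    by_contra fun hne => hmin i ⟨hi.trans hd, hi.trans hd', Ne.symm hne⟩ hi
  refine ⟨ndRes K u d hd.le, _, _, hne, (ndExt_ndRes u d hd.le).extNd hd, ?_⟩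
  rw [← hres]
  exact (ndExt_ndRes u' d hd'.le).extNd hd'

theorem isLimElt_of_isSuccLimit {b : K} (hb : IsSuccLimit b) : IsLimElt K b :=
  ⟨not_isMin_iff.mp hb.not_isMin,
    fun c hc => ⟨succ c, lt_succ_of_not_isMax hc.not_isMax, hb.succ_lt hc⟩⟩

end Successors

section Embedding

variable {K : Type u} [LinearOrder K]

def firstNd (p : PNd K) : Nd K K := ⟨p.1, p.2.1⟩

def secondNd (p : PNd K) : Nd K K := ⟨p.1, p.2.2⟩

def imageTree (e : Nd K K → PNd K) : Set (Nd K K) := {p | ∃ u, NdExt K (firstNd (e u)) p}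

theorem isSubtree_imageTree (e : Nd K K → PNd K) : IsSubtree K (imageTree e) :=
  fun p ⟨u, hu⟩ c hc => ⟨u, hu.trans (ndExt_ndRes p c hc)⟩

variable [SuccOrder K] {T : Set (PNd K)} {e : Nd K K → PNd K}

theorem SuperPerfEmb.ndExt_map (he : SuperPerfEmb K T e) {u u' : Nd K K} (h : NdExt K u' u) :
    NdExt K (firstNd (e u')) (firstNd (e u)) ∧ NdExt K (secondNd (e u')) (secondNd (e u)) := by
  rcases h.1.eq_or_lt with hl | hl
  · obtain rfl := h.eq_of_fst_eq hl.symm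
    exact ⟨.refl _, .refl _⟩
  · obtain ⟨h', h₁, h₂⟩ := he.2.1 u u' hl fun i => h.val i.1 i.2 _
    exact ⟨⟨h'.le, h₁⟩, ⟨h'.le, h₂⟩⟩

theorem SuperPerfEmb.ndExt_firstNd (he : SuperPerfEmb K T e) {u u' : Nd K K}
    (h : NdExt K u' u) : NdExt K (firstNd (e u')) (firstNd (e u)) :=
  (he.ndExt_map h).1

theorem SuperPerfEmb.ndExt_secondNd (he : SuperPerfEmb K T e) {u u' : Nd K K}
    (h : NdExt K u' u) : NdExt K (secondNd (e u')) (secondNd (e u)) :=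
  (he.ndExt_map h).2

theorem SuperPerfEmb.le_fst [WellFoundedLT K] (he : SuperPerfEmb K T e) (u : Nd K K) :
    u.1 ≤ (e u).1 := by
  suffices ∀ b, ∀ u : Nd K K, u.1 = b → b ≤ (e u).1 from this _ u rfl
  intro b
  induction b using WellFoundedLT.induction with
  | ind b ih =>
    rintro u rfl
    by_contra! hlt
    have hres := ih _ hlt (ndRes K u _ hlt.le) rfl
    have hlt' := (he.2.1 (ndRes K u _ hlt.le) u hlt fun _ => rfl).fst
    exact (hres.trans_lt hlt').false

theorem SuperPerfEmb.exists_split (he : SuperPerfEmb K T e) (u : Nd K K) :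
    ∃ γ, (e u).1 ≤ γ ∧ ∃ hlen : ∀ a, γ < (e (extNd K u a)).1,
      (∀ a a' i (hi : i < γ), (e (extNd K u a)).2.1 ⟨i, hi.trans (hlen a)⟩ =
        (e (extNd K u a')).2.1 ⟨i, hi.trans (hlen a')⟩) ∧
      Function.Injective fun a => (e (extNd K u a)).2.1 ⟨γ, hlen a⟩ := by
  obtain ⟨γ, hγ, hlen, hsplit⟩ := he.2.2.2 u
  refine ⟨γ, hγ, hlen, fun a a' i hi => ?_,
    fun a a' h => by_contra fun hne => (hsplit a a' hne).2 h⟩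
  rcases eq_or_ne a a' with rfl | hne
  · rfl
  · exact (hsplit a a' hne).1 ⟨i, hi⟩

theorem SuperPerfEmb.ndComparable_of_ndExt [WellFoundedLT K] (he : SuperPerfEmb K T e)
    {u u' : Nd K K} (h : NdExt K (firstNd (e u')) (firstNd (e u))) : NdComparable u u' := by
  by_contra hc
  obtain ⟨w, a, a', hne, hu, hu'⟩ := exists_extNd_of_not_ndComparable hc
  obtain ⟨γ, -, hlen, -, hinj⟩ := he.exists_split w
  have hγu : γ < (e u).1 := (hlen a).trans_le (he.ndExt_firstNd hu).1
  have hγu' : γ < (e u').1 := (hlen a').trans_le (he.ndExt_firstNd hu').1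
  refine hne (hinj ?_)
  calc (e (extNd K w a)).2.1 ⟨γ, hlen a⟩ = (e u).2.1 ⟨γ, hγu⟩ :=
        ((he.ndExt_firstNd hu).val γ (hlen a) hγu).symm
    _ = (e u').2.1 ⟨γ, hγu'⟩ := (h.val γ hγu hγu').symm
    _ = (e (extNd K w a')).2.1 ⟨γ, hlen a'⟩ := (he.ndExt_firstNd hu').val γ (hlen a') hγu'

theorem SuperPerfEmb.exists_ndExt_extNd [WellFoundedLT K] (he : SuperPerfEmb K T e)
    {u w : Nd K K} (h : NdExt K (firstNd (e u)) (firstNd (e w))) (hlt : (e w).1 < (e u).1) :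
    ∃ a, NdExt K u (extNd K w a) := by
  rcases he.ndComparable_of_ndExt h with h' | h'
  · exact absurd (he.ndExt_firstNd h').1 hlt.not_ge
  · have hw : w.1 < u.1 := h'.1.lt_of_ne fun heq => hlt.ne (by rw [h'.eq_of_fst_eq heq.symm])
    exact ⟨_, h'.extNd hw⟩

section Tracing

variable [WellFoundedLT K] {x : K → K} {L : Set K}

theorem SuperPerfEmb.exists_agreeOn_extNd (he : SuperPerfEmb K T e) (hL : IsLowerSet L)
    (hLmax : ∀ i ∈ L, ∃ c ∈ L, i < c) (hx : ∀ c ∈ L, xRes K x c ∈ imageTree e)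
    {w : Nd K K} (hw : AgreeOn L (firstNd (e w)) x) :
    ∃ a, AgreeOn L (firstNd (e (extNd K w a))) x := by
  obtain ⟨γ, hwγ, hlen, hbelow, hinj⟩ := he.exists_split w
  have hpick : ∀ c ∈ L, (e w).1 < c → ∃ a, ∀ i (hi : i < (e (extNd K w a)).1), i < c →
      (e (extNd K w a)).2.1 ⟨i, hi⟩ = x i := by
    intro c hc hwc
    obtain ⟨u, hu⟩ := hx c hc
    have hwu : NdExt K (firstNd (e u)) (firstNd (e w)) := .intro (hwc.le.trans hu.1)
      fun i hi hiu => (hu.val i (hi.trans hwc) hiu).trans (hw i hi (hL (hi.trans hwc).le hc)).symm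
    obtain ⟨a, ha⟩ := he.exists_ndExt_extNd hwu (hwc.trans_le hu.1)
    exact ⟨a, fun i hi hic =>
      ((he.ndExt_firstNd ha).val i hi (hic.trans_le hu.1)).symm.trans (hu.val i hic _)⟩
  by_cases hγ : γ ∈ L
  · -- the value of `x` at `γ` singles out the successor
    obtain ⟨c₁, hc₁, hγc₁⟩ := hLmax γ hγ
    obtain ⟨a, ha⟩ := hpick c₁ hc₁ (hwγ.trans_lt hγc₁)
    refine ⟨a, fun i hi hiL => ?_⟩
    obtain ⟨c, hc, hic⟩ := hLmax (max i c₁) (max_rec' L hiL hc₁)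
    have hc₁c : c₁ < c := (le_max_right _ _).trans_lt hic
    obtain ⟨a', ha'⟩ := hpick c hc (hwγ.trans_lt (hγc₁.trans hc₁c))
    obtain rfl : a' = a :=
      hinj ((ha' γ (hlen a') (hγc₁.trans hc₁c)).trans (ha γ (hlen a) hγc₁).symm)
    exact ha' i hi ((le_max_left _ _).trans_lt hic)
  · -- `L` lies below `γ`, where all successors agree
    refine ⟨w.1, fun i hi hiL => ?_⟩
    have hiγ : i < γ := lt_of_not_ge fun h => hγ (hL h hiL)
    rcases lt_or_ge i (e w).1 with hiw | hwi
    · exact ((he.ndExt_firstNd (ndExt_extNd w _)).val i hiw hi).trans (hw i hiw hiL)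
    · obtain ⟨c, hc, hic⟩ := hLmax i hiL
      obtain ⟨a, ha⟩ := hpick c hc (hwi.trans_lt hic)
      exact (hbelow w.1 a i hiγ).trans (ha i _ hic)

theorem SuperPerfEmb.exists_agreeOn_xRes (he : SuperPerfEmb K T e) (hL : IsLowerSet L)
    (hLmax : ∀ i ∈ L, ∃ c ∈ L, i < c) (hx : ∀ c ∈ L, xRes K x c ∈ imageTree e) :
    ∃ z : K → K, ∀ b, AgreeOn L (firstNd (e (xRes K z b))) x := by
  have hstep : ∀ w, ∃ a,
      AgreeOn L (firstNd (e w)) x → AgreeOn L (firstNd (e (extNd K w a))) x := fun w => by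
    by_cases hw : AgreeOn L (firstNd (e w)) x
    · exact (he.exists_agreeOn_extNd hL hLmax hx hw).imp fun _ ha _ => ha
    · exact ⟨w.1, fun h => absurd h hw⟩
  choose f hf using hstep
  obtain ⟨z, hz⟩ := exists_eq_apply_xRes f
  refine ⟨z, fun b => ?_⟩
  induction b using SuccOrder.limitRecOn with
  | isMin b hb =>
    intro i hi hiL
    obtain ⟨c, hc, hic⟩ := hLmax i hiL
    obtain ⟨u, hu⟩ := hx c hc
    have hbu : NdExt K u (xRes K z b) :=
      .intro (not_lt.mp hb.not_lt) fun j hj => absurd hj hb.not_lt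
    exact ((he.ndExt_firstNd hbu).val i hi (hic.trans_le hu.1)).symm.trans (hu.val i hic _)
  | succ b _ ih =>
    rw [xRes_succ, hz b]
    exact hf _ ih
  | isSuccLimit b hb ih =>
    intro i hi hiL
    obtain ⟨c, hcb, hic⟩ := he.2.2.1 (xRes K z b) (isLimElt_of_isSuccLimit hb) i hi
    exact ((he.ndExt_firstNd (ndExt_ndRes _ c hcb.le)).val i hic hi).trans (ih c hcb i hic hiL)

end Tracing

theorem SuperPerfEmb.superclosed_imageTree [WellFoundedLT K] (he : SuperPerfEmb K T e) :
    Superclosed K (imageTree e) := by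
  intro p hlim hres
  let x : K → K := fun i => if h : i < p.1 then p.2 ⟨i, h⟩ else i
  have hx : ∀ c ∈ Iio p.1, xRes K x c ∈ imageTree e := fun c hc => by
    have hxc : xRes K x c = ndRes K p c (le_of_lt hc) :=
      nd_ext rfl fun i hi _ => dif_pos (hi.trans hc)
    rw [hxc]
    exact hres c hc
  obtain ⟨z, hz⟩ := he.exists_agreeOn_xRes (isLowerSet_Iio _)
    (fun i hi => (hlim.2 i hi).imp fun _ h => ⟨h.2, h.1⟩) hx
  exact ⟨xRes K z p.1, .intro (he.le_fst (xRes K z p.1)) fun i hi hiz =>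
    (hz p.1 i hiz hi).trans (dif_pos hi)⟩

theorem SuperPerfEmb.exists_splitting (he : SuperPerfEmb K T e) {p : Nd K K}
    (hp : p ∈ imageTree e) :
    ∃ q ∈ imageTree e, NdExt K q p ∧ #K ≤ #(splitVals K (imageTree e) q) := by
  obtain ⟨u, hu⟩ := hp
  obtain ⟨γ, huγ, hlen, hbelow, hinj⟩ := he.exists_split u
  let q := ndRes K (firstNd (e (extNd K u p.1))) γ (hlen p.1).le
  have hqp : NdExt K q p := .intro (hu.1.trans huγ) fun i hi hiq =>
    ((he.ndExt_firstNd (ndExt_extNd u p.1)).trans hu).val i hi _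
  have hmem : ∀ a, (e (extNd K u a)).2.1 ⟨γ, hlen a⟩ ∈ splitVals K (imageTree e) q :=
    fun a => ⟨firstNd (e (extNd K u a)), ⟨_, .refl _⟩, hlen a,
      fun i => hbelow a p.1 i.1 i.2, rfl⟩
  exact ⟨q, ⟨_, ndExt_ndRes _ _ _⟩, hqp,
    mk_le_of_injective (f := fun a => ⟨_, hmem a⟩) fun _ _ h => hinj (congrArg Subtype.val h)⟩

theorem SuperPerfEmb.millerTree_imageTree [WellFoundedLT K] [Nonempty K]
    (he : SuperPerfEmb K T e) : MillerTree K (imageTree e) := by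
  obtain ⟨a⟩ := ‹Nonempty K›
  exact ⟨⟨_, ⟨a, fun _ => a⟩, .refl _⟩, isSubtree_imageTree e, he.superclosed_imageTree,
    fun _ => he.exists_splitting⟩

theorem SuperPerfEmb.mem_pProj [WellFoundedLT K] [NoMaxOrder K] (he : SuperPerfEmb K T e)
    (hT : IsPSubtree K T) {x z : K → K} (hz : ∀ b, AgreeOn univ (firstNd (e (xRes K z b))) x) :
    x ∈ pProj K T := by
  obtain ⟨y, hy⟩ := exists_agreeOn_of_monotone (fun u => secondNd (e u))
    (fun h => he.ndExt_secondNd h) he.le_fst z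
  refine ⟨y, fun b => ?_⟩
  have hb := he.le_fst (xRes K z b)
  have hfst : (fun i : Iio b => x i.1) = fun i => (e (xRes K z b)).2.1 ⟨i.1, i.2.trans_le hb⟩ :=
    funext fun i => (hz b i.1 _ trivial).symm
  have hsnd : (fun i : Iio b => y i.1) = fun i => (e (xRes K z b)).2.2 ⟨i.1, i.2.trans_le hb⟩ :=
    funext fun i => (hy b i.1 _ trivial).symm
  rw [hfst, hsnd]
  exact hT _ (he.1 _) b hb

theorem SuperPerfEmb.body_imageTree_subset [WellFoundedLT K] [NoMaxOrder K]
    (he : SuperPerfEmb K T e) (hT : IsPSubtree K T) : body K (imageTree e) ⊆ pProj K T :=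
  fun _ hx =>
    let ⟨_, hz⟩ := he.exists_agreeOn_xRes isLowerSet_univ
      (fun i _ => (exists_gt i).imp fun _ h => ⟨trivial, h⟩) fun c _ => hx c
    he.mem_pProj hT hz

end Embedding

theorem KCompact.mk_image_eval_lt {K : Type u} [LinearOrder K] [NoMaxOrder K]
    {A : Set (K → K)} (hA : KCompact K A) (j : K) : #((fun x : K → K => x j) '' A) < #K := by
  let U : K → Set (K → K) := fun a => {x | x j = a}
  have hU : ∀ a, IsOpen[bTop K K] (U a) := fun a => by
    let _ : TopologicalSpace (K → K) := bTop K K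
    obtain ⟨b, hjb⟩ := exists_gt j
    have : U a = ⋃ s ∈ U a, {x | ∀ i, i < b → x i = s i} := by
      ext x
      simp only [mem_iUnion]
      exact ⟨fun hx => ⟨x, hx, fun _ _ => rfl⟩,
        fun ⟨s, hs, hxs⟩ => (hxs j hjb).trans hs⟩
    rw [this]
    exact isOpen_biUnion fun s _ => TopologicalSpace.isOpen_generateFrom_of_mem ⟨b, s, rfl⟩
  obtain ⟨𝒱, h𝒱, h𝒱card, hcov⟩ := hA (range U) (forall_mem_range.2 hU)
    fun x _ => mem_sUnion.2 ⟨U (x j), mem_range_self _, rfl⟩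
  have hsub : (fun x : K → K => x j) '' A ⊆ {a | U a ∈ 𝒱} := by
    rintro _ ⟨x, hx, rfl⟩
    obtain ⟨V, hV, hxV⟩ := hcov hx
    obtain ⟨a, rfl⟩ := h𝒱 hV
    show U (x j) ∈ 𝒱
    rwa [show x j = a from hxV]
  have hinj : #{a | U a ∈ 𝒱} ≤ #𝒱 := mk_le_of_injective (f := fun a => ⟨U a.1, a.2⟩)
    fun a a' h => by
      have hconst : (fun _ => a.1 : K → K) ∈ U a'.1 := by
        rw [← show U a.1 = U a'.1 from congrArg Subtype.val h]
        rfl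
      exact Subtype.ext hconst
  exact (mk_le_mk_of_subset hsub).trans_lt (hinj.trans_lt h𝒱card)

theorem SuperPerfEmb.exists_extNd_not_mem {K : Type u} [LinearOrder K] [SuccOrder K]
    {T : Set (PNd K)} {e : Nd K K → PNd K} (he : SuperPerfEmb K T e) (w : Nd K K)
    {F : K → Set K} (hF : ∀ γ, #(F γ) < #K) :
    ∃ a γ, ∃ h : γ < (e (extNd K w a)).1, (e (extNd K w a)).2.1 ⟨γ, h⟩ ∉ F γ := by
  obtain ⟨γ, -, hlen, -, hinj⟩ := he.exists_split w
  by_contra! h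
  exact (hF γ).not_ge <| mk_le_of_injective (f := fun a => ⟨_, h a γ (hlen a)⟩)
    fun _ _ h' => hinj (congrArg Subtype.val h')

theorem SuperPerfEmb.not_subset_isKK {K : Type u} [LinearOrder K] [WellFoundedLT K]
    [SuccOrder K] [NoMaxOrder K] {T : Set (PNd K)} {e : Nd K K → PNd K}
    (he : SuperPerfEmb K T e) (hT : IsPSubtree K T) : ¬∃ B, IsKK K B ∧ pProj K T ⊆ B := by
  rintro ⟨_, ⟨C, hC, rfl⟩, hsub⟩
  choose f γ hγ hf using fun w : Nd K K =>
    he.exists_extNd_not_mem w fun γ => (hC w.1).mk_image_eval_lt γ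
  obtain ⟨z, hz⟩ := exists_eq_apply_xRes f
  obtain ⟨x, hx⟩ := exists_agreeOn_of_monotone (fun u => firstNd (e u))
    (fun h => he.ndExt_firstNd h) he.le_fst z
  obtain ⟨b, hb⟩ := mem_iUnion.1 (hsub (he.mem_pProj hT hx))
  have hstep := hx (succ b)
  rw [xRes_succ, hz b] at hstep
  exact hf (xRes K z b) ⟨x, hb, (hstep _ (hγ _) trivial).symm⟩

theorem superPerfEmb_miller_and_not_KK_general (K : Type u) [LinearOrder K]
    [WellFoundedLT K] [SuccOrder K] [NoMaxOrder K]
    (hunc : ℵ₀ < #K)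
    (T : Set (PNd K)) (hT : IsPSubtree K T)
    (e : Nd K K → PNd K) (he : SuperPerfEmb K T e) :
    (∃ S, MillerTree K S ∧ body K S ⊆ pProj K T) ∧
    ¬ ∃ B, IsKK K B ∧ pProj K T ⊆ B := by
  have : Nonempty K := mk_ne_zero_iff.mp (aleph0_pos.trans hunc).ne'
  exact ⟨⟨imageTree e, he.millerTree_imageTree, he.body_imageTree_subset hT⟩,
    he.not_subset_isKK hT⟩

/-- If there is an `∃^x`-superperfect embedding into a product tree `T`, then
there is a κ-Miller tree `S` with `[S] ⊆ p[T]`; in particular `p[T]` is not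
contained in any `K_κ` subset of `K → K`. -/
theorem superPerfEmb_miller_and_not_KK (K : Type u) [LinearOrder K]
    [WellFoundedLT K] [SuccOrder K] [NoMaxOrder K]
    (hseg : ∀ b : K, #(Set.Iio b) < #K)
    (hunc : ℵ₀ < #K) (hpow : Cardinal.powerlt #K #K = #K)
    (T : Set (PNd K)) (hT : IsPSubtree K T)
    (e : Nd K K → PNd K) (he : SuperPerfEmb K T e) :
    (∃ S, MillerTree K S ∧ body K S ⊆ pProj K T) ∧
    ¬ ∃ B, IsKK K B ∧ pProj K T ⊆ B :=
  superPerfEmb_miller_and_not_KK_general K hunc T hT e he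
end

section
/- Let κ be an uncountable cardinal with κ = κ^{<κ}. Assume every Σ¹₁ subset of κ^κ satisfies the Hurewicz dichotomy. Then for every Σ¹₁ set A ⊆ κ^κ and every closed subset C of κ^κ homeomorphic to κ^κ, there is a closed subset D ⊆ C homeomorphic to κ^κ with either D ⊆ A or D ∩ A = ∅. -/
open Cardinal Set Topology

universe u

/-! If `A ∩ C` is not covered by a `K_κ` set `⋃ b, E b`, the dichotomy gives a closed copy of
`κ^κ` inside `A ∩ C`. Otherwise apply the dichotomy to `C \ ⋃ b, E b`, which is again Σ¹₁: a
point outside a κ-compact set is separated from it below some level (a subcover has fewer than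
κ basic sets, and `κ^{<κ} = κ` makes κ regular, so their lengths are bounded), and these levels
are the witnesses of a closed set projecting onto `C \ ⋃ b, E b`. A closed copy of `κ^κ` inside
it is disjoint from `A`. The remaining case, `C` covered by κ many κ-compact sets, is impossible:
transported to `κ^κ` through the homeomorphism, such a cover is defeated by diagonalization,
since a κ-compact set takes fewer than κ values at each coordinate. -/

attribute [local instance] bTop

section Cardinal

variable {K : Type u} [LinearOrder K]

theorem noMaxOrder_of_mk_Iio_lt (hseg : ∀ b : K, #(Iio b) < #K) (hK : ℵ₀ ≤ #K) :
    NoMaxOrder K := by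
  refine ⟨fun b => ?_⟩
  by_contra! hmax
  have huniv : Iic b = Set.univ := eq_univ_of_forall hmax
  have : #K ≤ #(Iio b) + 1 := by
    rw [← mk_univ, ← huniv, ← Iio_insert]
    exact mk_insert_le
  exact this.not_gt (add_lt_of_lt hK (hseg b) (one_lt_aleph0.trans_le hK))

theorem Cardinal.isRegular_of_powerlt_self_s15 {κ : Cardinal.{u}} (hκ : ℵ₀ ≤ κ) (h : κ ^< κ = κ) :
    κ.IsRegular := by
  refine ⟨hκ, le_of_not_gt fun hcof => ?_⟩
  have := (lt_power_cof_ord hκ).trans_le ((le_powerlt κ hcof).trans h.le)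
  exact this.false

theorem bddAbove_of_mk_lt (hseg : ∀ b : K, #(Iio b) < #K) (hreg : (#K).IsRegular)
    {S : Set K} (hS : #S < #K) : BddAbove S := by
  by_contra hS'
  have hcov : (⋃ c ∈ S, Iio c) = Set.univ :=
    eq_univ_of_forall fun a => by
      obtain ⟨c, hc, hac⟩ := not_bddAbove_iff.mp hS' a
      exact mem_biUnion hc hac
  have := (card_biUnion_lt_iff_forall_of_isRegular hreg hS).mpr fun c _ => hseg c
  rw [hcov, mk_univ] at this
  exact this.false

end Cardinal

section KCompact

variable {K Y : Type u} [LinearOrder K]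

theorem isOpen_cylinder (b : K) (s : K → Y) : IsOpen {x : K → Y | ∀ i < b, x i = s i} :=
  TopologicalSpace.isOpen_generateFrom_of_mem ⟨b, s, rfl⟩

theorem isOpen_eval_eq [NoMaxOrder K] (b : K) (a : Y) : IsOpen {x : K → Y | x b = a} := by
  obtain ⟨c, hbc⟩ := exists_gt b
  refine isOpen_iff_forall_mem_open.mpr fun x hx => ⟨_, ?_, isOpen_cylinder c x, fun _ _ => rfl⟩
  intro y hy
  exact (hy b hbc).trans hx

theorem KCompact.elim_iUnion {A : Set (K → Y)} (hA : KCompact K A) {ι : Type u}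
    (U : ι → Set (K → Y)) (hU : ∀ i, IsOpen (U i)) (hcov : A ⊆ ⋃ i, U i) :
    ∃ s : Set ι, #s < #K ∧ A ⊆ ⋃ i ∈ s, U i := by
  obtain ⟨𝒱, h𝒱, h𝒱K, hA𝒱⟩ :=
    hA (range U) (forall_mem_range.mpr hU) (by rwa [sUnion_range])
  choose idx hidx using fun V : 𝒱 => h𝒱 V.2
  refine ⟨range idx, mk_range_le.trans_lt h𝒱K, fun y hy => ?_⟩
  obtain ⟨V, hV, hyV⟩ := hA𝒱 hy
  exact mem_biUnion (mem_range_self ⟨V, hV⟩) ((hidx ⟨V, hV⟩).symm ▸ hyV)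

theorem KCompact.inter_isClosed {E C : Set (K → Y)} (hE : KCompact K E) (hC : IsClosed C) :
    KCompact K (E ∩ C) := by
  intro 𝒰 h𝒰 hcov
  have hcov' : E ⊆ ⋃₀ insert Cᶜ 𝒰 := fun y hy => by
    by_cases hyC : y ∈ C
    · obtain ⟨U, hU, hyU⟩ := hcov ⟨hy, hyC⟩
      exact ⟨U, mem_insert_of_mem _ hU, hyU⟩
    · exact ⟨Cᶜ, mem_insert _ _, hyC⟩
  obtain ⟨𝒱, h𝒱, h𝒱K, hE𝒱⟩ :=
    hE _ (forall_mem_insert.mpr ⟨hC.isOpen_compl, h𝒰⟩) hcov'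
  refine ⟨𝒱 ∩ 𝒰, inter_subset_right, (mk_le_mk_of_subset inter_subset_left).trans_lt h𝒱K, ?_⟩
  rintro y ⟨hyE, hyC⟩
  obtain ⟨V, hV, hyV⟩ := hE𝒱 hyE
  rcases h𝒱 hV with rfl | hV𝒰
  · exact absurd hyC hyV
  · exact ⟨V, ⟨hV, hV𝒰⟩, hyV⟩

theorem KCompact.union {E F : Set (K → Y)} (hK : ℵ₀ ≤ #K) (hE : KCompact K E)
    (hF : KCompact K F) : KCompact K (E ∪ F) := by
  intro 𝒰 h𝒰 hcov
  obtain ⟨𝒱, h𝒱, h𝒱K, hE𝒱⟩ := hE 𝒰 h𝒰 (subset_union_left.trans hcov)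
  obtain ⟨𝒲, h𝒲, h𝒲K, hF𝒲⟩ := hF 𝒰 h𝒰 (subset_union_right.trans hcov)
  refine ⟨𝒱 ∪ 𝒲, union_subset h𝒱 h𝒲, (mk_union_le _ _).trans_lt (add_lt_of_lt hK h𝒱K h𝒲K),
    union_subset (hE𝒱.trans (sUnion_mono subset_union_left))
      (hF𝒲.trans (sUnion_mono subset_union_right))⟩

theorem KCompact.image_of_continuous {Z : Type u} {C E : Set (K → Y)} (hE : KCompact K E)
    (hEC : E ⊆ C) {f : C → (K → Z)} (hf : Continuous f) :
    KCompact K (f '' ((↑) ⁻¹' E)) := by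
  intro 𝒰 h𝒰 hcov
  choose V hV hVf using fun U : 𝒰 => isOpen_induced_iff.mp (hf.isOpen_preimage _ (h𝒰 U U.2))
  have hcovV : E ⊆ ⋃ U, V U := fun y hy => by
    obtain ⟨U, hU, hyU⟩ := hcov (mem_image_of_mem f (show (⟨y, hEC hy⟩ : C) ∈ _ from hy))
    exact mem_iUnion.mpr ⟨⟨U, hU⟩, show (⟨y, hEC hy⟩ : C) ∈ (↑) ⁻¹' V ⟨U, hU⟩ by
      rw [hVf]; exact hyU⟩
  obtain ⟨s, hsK, hEs⟩ := hE.elim_iUnion V hV hcovV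
  refine ⟨(↑) '' s, fun _ ⟨U, _, hU⟩ => hU ▸ U.2, mk_image_le.trans_lt hsK, ?_⟩
  rintro _ ⟨y, hy, rfl⟩
  obtain ⟨U, hU, hyU⟩ := mem_iUnion₂.mp (hEs hy)
  exact ⟨U, mem_image_of_mem _ hU, show y ∈ f ⁻¹' U by rw [← hVf]; exact hyU⟩

variable [NoMaxOrder K]

theorem KCompact.mk_image_eval_lt_s15 {E : Set (K → Y)} (hE : KCompact K E) (b : K) :
    #((fun y => y b) '' E) < #K := by
  obtain ⟨c, hbc⟩ := exists_gt b
  obtain ⟨s, hsK, hEs⟩ := hE.elim_iUnion (fun s : K → Y => {x | ∀ i < c, x i = s i})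
    (fun s => isOpen_cylinder c s) fun y _ => mem_iUnion.mpr ⟨y, fun _ _ => rfl⟩
  refine (mk_le_mk_of_subset (t := (fun t : K → Y => t b) '' s) ?_).trans_lt
    (mk_image_le.trans_lt hsK)
  rintro _ ⟨y, hy, rfl⟩
  obtain ⟨t, ht, hyt⟩ := mem_iUnion₂.mp (hEs hy)
  exact ⟨t, ht, (hyt b hbc).symm⟩

theorem KCompact.exists_separating_level (hseg : ∀ b : K, #(Iio b) < #K)
    (hreg : (#K).IsRegular) {E : Set (K → Y)} (hE : KCompact K E) {x : K → Y} (hx : x ∉ E) :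
    ∃ h, ∀ y ∈ E, ∃ i < h, y i ≠ x i := by
  have hsep : ∀ y : E, ∃ c, ∃ i < c, y.1 i ≠ x i := fun y => by
    obtain ⟨i, hi⟩ := Function.ne_iff.mp (ne_of_mem_of_not_mem y.2 hx)
    obtain ⟨c, hic⟩ := exists_gt i
    exact ⟨c, i, hic, hi⟩
  choose c i hic hi using hsep
  obtain ⟨s, hsK, hEs⟩ := hE.elim_iUnion (fun y => {z | ∀ j < c y, z j = y.1 j})
    (fun y => isOpen_cylinder _ _) fun y hy => mem_iUnion.mpr ⟨⟨y, hy⟩, fun _ _ => rfl⟩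
  obtain ⟨h, hh⟩ := bddAbove_of_mk_lt hseg hreg (mk_image_le.trans_lt hsK : #(c '' s) < #K)
  refine ⟨h, fun z hz => ?_⟩
  obtain ⟨y, hy, hzy⟩ := mem_iUnion₂.mp (hEs hz)
  refine ⟨i y, (hic y).trans_le (hh (mem_image_of_mem c hy)), ?_⟩
  rw [hzy _ (hic y)]
  exact hi y

theorem exists_forall_notMem_of_kCompact {E : K → Set (K → K)} (hE : ∀ b, KCompact K (E b)) :
    ∃ x : K → K, ∀ b, x ∉ E b := by
  have : ∀ b, ∃ a, a ∉ (fun y => y b) '' E b := fun b => by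
    by_contra! h
    have := (hE b).mk_image_eval_lt_s15 b
    rw [eq_univ_of_forall h, mk_univ] at this
    exact this.false
  choose x hx using this
  exact ⟨x, fun b hb => hx b (mem_image_of_mem _ hb)⟩

theorem not_subset_iUnion_of_homeoToBaire {C : Set (K → K)} (hC : IsClosed C)
    (hCh : HomeoToBaire K C) {E : K → Set (K → K)} (hE : ∀ b, KCompact K (E b)) :
    ¬ C ⊆ ⋃ b, E b := by
  obtain ⟨φ⟩ := hCh
  obtain ⟨x, hx⟩ := exists_forall_notMem_of_kCompact fun b =>
    ((hE b).inter_isClosed hC).image_of_continuous inter_subset_right φ.continuous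
  intro hCE
  obtain ⟨b, hb⟩ := mem_iUnion.mp (hCE (φ.symm x).2)
  exact hx b ⟨φ.symm x, ⟨hb, (φ.symm x).2⟩, φ.apply_symm_apply x⟩

end KCompact

section Sigma11

variable {K : Type u} [LinearOrder K]

theorem Sigma11.inter_isClosed {A C : Set (K → K)} (hA : Sigma11 K A) (hC : IsClosed C) :
    Sigma11 K (A ∩ C) := by
  obtain ⟨F, hF, rfl⟩ := hA
  refine ⟨F ∩ Prod.fst ⁻¹' C, hF.inter (hC.preimage continuous_fst), ?_⟩
  ext x
  constructor
  · rintro ⟨⟨p, hp, rfl⟩, hpC⟩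
    exact ⟨p, ⟨hp, hpC⟩, rfl⟩
  · rintro ⟨p, ⟨hp, hpC⟩, rfl⟩
    exact ⟨⟨p, hp, rfl⟩, hpC⟩

theorem isOpen_agree_below_eval [NoMaxOrder K] (z : K → K) (b : K) :
    IsOpen {p : (K → K) × (K → K) | ∀ i < p.2 b, z i = p.1 i} := by
  have : {p : (K → K) × (K → K) | ∀ i < p.2 b, z i = p.1 i} =
      ⋃ a, {x | ∀ i < a, x i = z i} ×ˢ {y | y b = a} := by
    ext p
    simp only [mem_ofPred_eq, mem_iUnion, mem_prod]
    exact ⟨fun h => ⟨_, fun i hi => (h i hi).symm, rfl⟩,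
      fun ⟨a, h, ha⟩ i hi => (h i (ha ▸ hi)).symm⟩
  rw [this]
  exact isOpen_iUnion fun a => (isOpen_cylinder a z).prod (isOpen_eval_eq b a)

theorem sigma11_diff_iUnion_kCompact [NoMaxOrder K] (hseg : ∀ b : K, #(Iio b) < #K)
    (hreg : (#K).IsRegular) {C : Set (K → K)} (hC : IsClosed C) {E : K → Set (K → K)}
    (hE : ∀ b, KCompact K (E b)) : Sigma11 K (C \ ⋃ b, E b) := by
  refine ⟨(C ×ˢ Set.univ) ∩ ⋂ b, ⋂ z ∈ E b, {p | ∀ i < p.2 b, z i = p.1 i}ᶜ,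
    (hC.prod isClosed_univ).inter (isClosed_iInter fun b => isClosed_biInter fun z _ =>
      (isOpen_agree_below_eval z b).isClosed_compl), ?_⟩
  ext x
  simp only [mem_sdiff, mem_iUnion, not_exists, mem_image, mem_inter_iff, mem_prod, mem_univ,
    and_true, mem_iInter, mem_compl_iff, mem_ofPred_eq, not_forall]
  constructor
  · rintro ⟨hxC, hxE⟩
    choose h hh using fun b => (hE b).exists_separating_level hseg hreg (hxE b)
    exact ⟨(x, h), ⟨hxC, fun b z hz => by simpa using hh b z hz⟩, rfl⟩
  · rintro ⟨⟨x, y⟩, ⟨hxC, hsep⟩, rfl⟩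
    refine ⟨hxC, fun b hxb => ?_⟩
    obtain ⟨i, -, hi⟩ := hsep b x hxb
    exact hi rfl

end Sigma11

theorem measurability_from_hurewicz_general (K : Type u) [LinearOrder K]
    (hseg : ∀ b : K, #(Set.Iio b) < #K)
    (hunc : ℵ₀ < #K) (hpow : Cardinal.powerlt #K #K = #K)
    (hHD : ∀ A : Set (K → K), Sigma11 K A → HD K A)
    (A : Set (K → K)) (hA : Sigma11 K A)
    (C : Set (K → K)) (hCcl : IsClosed[bTop K K] C) (hCh : HomeoToBaire K C) :
    ∃ D ⊆ C, IsClosed[bTop K K] D ∧ HomeoToBaire K D ∧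
      (D ⊆ A ∨ D ∩ A = ∅) := by
  have := noMaxOrder_of_mk_Iio_lt hseg hunc.le
  have hreg := isRegular_of_powerlt_self_s15 hunc.le hpow
  rcases hHD (A ∩ C) (hA.inter_isClosed hCcl) with ⟨_, ⟨E, hE, rfl⟩, hACE⟩ | ⟨D, hDAC, hD, hDh⟩
  · rcases hHD (C \ ⋃ b, E b) (sigma11_diff_iUnion_kCompact hseg hreg hCcl hE) with
      ⟨_, ⟨E', hE', rfl⟩, hCE'⟩ | ⟨D, hDC, hD, hDh⟩
    · have hCcov : C ⊆ ⋃ b, E b ∪ E' b := by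
        rw [iUnion_union_distrib]
        exact sdiff_subset_iff.mp hCE'
      exact absurd hCcov
        (not_subset_iUnion_of_homeoToBaire hCcl hCh fun b => (hE b).union hunc.le (hE' b))
    · refine ⟨D, fun x hx => (hDC hx).1, hD, hDh, Or.inr (eq_empty_of_forall_notMem ?_)⟩
      exact fun x ⟨hxD, hxA⟩ => (hDC hxD).2 (hACE ⟨hxA, (hDC hxD).1⟩)
  · exact ⟨D, fun x hx => (hDAC hx).2, hD, hDh, Or.inl fun x hx => (hDAC hx).1⟩

/-- If all Σ¹₁ sets satisfy the Hurewicz dichotomy, then for every Σ¹₁ set `A`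
and every closed copy `C` of the generalized Baire space there is a closed copy
`D ⊆ C` of the generalized Baire space with `D ⊆ A` or `D ∩ A = ∅`. -/
theorem measurability_from_hurewicz (K : Type u) [LinearOrder K] [WellFoundedLT K]
    (hseg : ∀ b : K, #(Set.Iio b) < #K)
    (hunc : ℵ₀ < #K) (hpow : Cardinal.powerlt #K #K = #K)
    (hHD : ∀ A : Set (K → K), Sigma11 K A → HD K A)
    (A : Set (K → K)) (hA : Sigma11 K A)
    (C : Set (K → K)) (hCcl : IsClosed[bTop K K] C) (hCh : HomeoToBaire K C) :
    ∃ D ⊆ C, IsClosed[bTop K K] D ∧ HomeoToBaire K D ∧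
      (D ⊆ A ∨ D ∩ A = ∅) :=
  measurability_from_hurewicz_general K hseg hunc hpow hHD A hA C hCcl hCh
end
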